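/- arXiv:1112.6327 — 8 statements merged into one kernel-verified Lean document; each statement's English description precedes it below -/
import Mathlib

section
/- For an elementary abelian 2-group V and any natural number n, the inclusion 2^n · I(V) ⊆ I(V)^{n+1} holds, where I(V) is the augmentation ideal of the integral group ring Z[V]. -/
/-- The augmentation map of the integral group ring `ℤ[V]`. -/
noncomputable def aug (V : Type) [AddCommGroup V] :
    AddMonoidAlgebra ℤ V →ₐ[ℤ] ℤ :=
  AddMonoidAlgebra.lift ℤ ℤ V 1

/-- The augmentation ideal `I(V)` of `ℤ[V]`. -/
noncomputable def augIdeal (V : Type) [AddCommGroup V] :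
    Ideal (AddMonoidAlgebra ℤ V) :=
  RingHom.ker (aug V).toRingHom

/-!
The ideal `I(V)` is generated by the elements `[v] - 1`. Since `v + v = 0`, `g = [v]` satisfies
`g² = 1`, so `2 (g - 1) = (1 - g)(g - 1)` and hence `2ⁿ (g - 1) = (1 - g)ⁿ (g - 1) ∈ I(V)ⁿ⁺¹`.
-/

open AddMonoidAlgebra

theorem two_pow_mul_sub_one_eq_of_mul_self_eq_one {A : Type*} [CommRing A] {g : A}
    (hg : g * g = 1) (n : ℕ) : 2 ^ n * (g - 1) = (1 - g) ^ n * (g - 1) := by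
  induction n with
  | zero => simp
  | succ n ih => linear_combination 2 * ih + (1 - g) ^ n * hg

theorem two_pow_mul_sub_one_mem_pow {A : Type*} [CommRing A] {I : Ideal A} {g : A}
    (hg : g * g = 1) (hgI : g - 1 ∈ I) (n : ℕ) : 2 ^ n * (g - 1) ∈ I ^ (n + 1) := by
  have hneg : 1 - g ∈ I := by simpa using I.neg_mem hgI
  rw [two_pow_mul_sub_one_eq_of_mul_self_eq_one hg, pow_succ]
  exact Ideal.mul_mem_mul (Ideal.pow_mem_pow hneg n) hgI

theorem AddMonoidAlgebra.single_one_mul_self_eq_one {R G : Type*} [Semiring R] [AddMonoid G]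
    {v : G} (hv : v + v = 0) : single v (1 : R) * single v 1 = 1 := by
  rw [single_mul_single, hv, mul_one, one_def]

section Augmentation

variable {V : Type} [AddCommGroup V]

theorem aug_apply (x : AddMonoidAlgebra ℤ V) : aug V x = x.coeff.sum fun _ r => r := by
  simp [aug, lift_apply]

theorem sub_aug_eq_sum (x : AddMonoidAlgebra ℤ V) :
    x - (aug V x : AddMonoidAlgebra ℤ V) = x.coeff.sum fun v r => r • (single v 1 - 1) := by
  nth_rw 1 [← sum_coeff_single x]
  simp only [aug_apply, Finsupp.sum, Int.cast_sum, ← Finset.sum_sub_distrib, smul_sub,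
    smul_single', mul_one, zsmul_one]

theorem single_sub_one_mem_augIdeal (v : V) : single v 1 - 1 ∈ augIdeal V := by
  simp [augIdeal, aug]

theorem augIdeal_eq_span : augIdeal V = Ideal.span (Set.range fun v : V => single v 1 - 1) := by
  refine le_antisymm (fun x hx => ?_) (Ideal.span_le.2 ?_)
  · have hx0 : aug V x = 0 := hx
    rw [← sub_zero x, ← Int.cast_zero, ← hx0, sub_aug_eq_sum]
    exact Submodule.sum_mem _ fun v _ =>
      Submodule.smul_of_tower_mem _ (x.coeff v) (Ideal.subset_span ⟨v, rfl⟩)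
  · rintro _ ⟨v, rfl⟩
    exact single_sub_one_mem_augIdeal v

end Augmentation

/-- For an elementary abelian 2-group `V` and `n : ℕ`, one has `2^n · I(V) ⊆ I(V)^(n+1)`. -/
theorem stmt1 (V : Type) [AddCommGroup V] [Module (ZMod 2) V] (n : ℕ) :
    ∀ x ∈ augIdeal V, (2 : AddMonoidAlgebra ℤ V) ^ n * x ∈ (augIdeal V) ^ (n + 1) := by
  suffices augIdeal V ≤ ((augIdeal V) ^ (n + 1)).colon {2 ^ n} by
    intro x hx
    simpa [Submodule.mem_colon_singleton, mul_comm] using this hx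
  refine augIdeal_eq_span.le.trans (Ideal.span_le.2 ?_)
  rintro _ ⟨v, rfl⟩
  rw [SetLike.mem_coe, Submodule.mem_colon_singleton, smul_eq_mul, mul_comm]
  exact two_pow_mul_sub_one_mem_pow (single_one_mul_self_eq_one (ZModModule.add_self v))
    (single_sub_one_mem_augIdeal v) n
end

section
/- For an elementary abelian 2-group V and integer n > 0, the quotient R^n(V) := I(V)/I(V)^{n+1} satisfies 2^{n+1}·R^n(V) = 0, and for V = F_2 of rank one there is an isomorphism R^n(F_2) ≅ Z/2^n. -/
/-- The quotient `I(V)^m / I(V)^k` of powers of the augmentation ideal,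
as a quotient of `ℤ`-modules. -/
noncomputable abbrev powQuot (V : Type) [AddCommGroup V] (m k : ℕ) : Type :=
  (Submodule.restrictScalars ℤ (augIdeal V ^ m)) ⧸
    (Submodule.comap (Submodule.restrictScalars ℤ (augIdeal V ^ m)).subtype
      (Submodule.restrictScalars ℤ (augIdeal V ^ k)))

theorem Ideal.pow_mul_le_pow_succ_of_mul_le_sq {R : Type*} [CommSemiring R] {I J : Ideal R}
    (h : J * I ≤ I ^ 2) (n : ℕ) : J ^ n * I ≤ I ^ (n + 1) := by
  induction n with
  | zero => simp
  | succ n ih =>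
    calc J ^ (n + 1) * I = J * (J ^ n * I) := by ring
      _ ≤ J * I ^ (n + 1) := Ideal.mul_mono_right ih
      _ = J * I * I ^ n := by ring
      _ ≤ I ^ 2 * I ^ n := Ideal.mul_mono_left h
      _ = I ^ (n + 1 + 1) := by ring

open AddMonoidAlgebra

section General

variable {V : Type} [AddCommGroup V]

theorem aug_single (v : V) (a : ℤ) : aug V (single v a) = a := by
  simp [aug, lift_single]

theorem sub_algebraMap_aug_mem_span (x : ℤ[V]) :
    x - algebraMap ℤ ℤ[V] (aug V x) ∈ Ideal.span (Set.range fun v : V => single v 1 - 1) := by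
  induction x using AddMonoidAlgebra.induction_linear with
  | zero => simp
  | add x y hx hy => simpa [add_sub_add_comm] using add_mem hx hy
  | single v a =>
    have h : single v a - algebraMap ℤ ℤ[V] a = a • (single v 1 - 1) := by
      rw [smul_sub, smul_single, smul_eq_mul, mul_one, Algebra.algebraMap_eq_smul_one]
    rw [aug_single, h]
    exact Submodule.smul_of_tower_mem _ a (Ideal.subset_span ⟨v, rfl⟩)

theorem coe_mem_augIdeal (y : Submodule.restrictScalars ℤ (augIdeal V ^ 1)) :
    (y : ℤ[V]) ∈ augIdeal V := by
  simpa only [Submodule.restrictScalars_mem, pow_one] using y.2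

theorem single_sub_one_sq {v : V} (hv : v + v = 0) :
    (single v 1 - 1 : ℤ[V]) ^ 2 = -2 * (single v 1 - 1) := by
  have h : (single v 1 * single v 1 : ℤ[V]) = 1 := by
    rw [single_mul_single, hv, one_mul, one_def]
  linear_combination h

variable [Module (ZMod 2) V]

theorem span_two_mul_augIdeal_le : Ideal.span {2} * augIdeal V ≤ augIdeal V ^ 2 := by
  rw [augIdeal_eq_span, Ideal.span_mul_span', Ideal.span_le]
  rintro _ ⟨_, rfl, _, ⟨v, rfl⟩, rfl⟩
  change (2 : ℤ[V]) * (single v 1 - 1) ∈ _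
  rw [show (2 : ℤ[V]) * (single v 1 - 1) = -(single v 1 - 1) ^ 2 by
    rw [single_sub_one_sq (ZModModule.add_self v)]; ring]
  exact neg_mem (Ideal.pow_mem_pow (Ideal.subset_span (Set.mem_range_self v)) 2)

theorem two_pow_smul_powQuot_eq_zero (n : ℕ) (x : powQuot V 1 (n + 1)) : (2 : ℤ) ^ n • x = 0 := by
  obtain ⟨y, rfl⟩ := Submodule.Quotient.mk_surjective _ x
  rw [← Submodule.Quotient.mk_smul, Submodule.Quotient.mk_eq_zero]
  have h2 : (2 : ℤ[V]) ^ n ∈ Ideal.span {2} ^ n :=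
    Ideal.pow_mem_pow (Ideal.mem_span_singleton_self 2) n
  simp only [Submodule.mem_comap, Submodule.subtype_apply, Submodule.restrictScalars_mem]
  rw [SetLike.val_smul, zsmul_eq_mul]
  push_cast
  exact Ideal.pow_mul_le_pow_succ_of_mul_le_sq (R := ℤ[V]) span_two_mul_augIdeal_le n
    (Ideal.mul_mem_mul h2 (coe_mem_augIdeal y))

end General

section RankOne

noncomputable def tau : ℤ[ZMod 2] := single 1 1 - 1

theorem tau_mem_augIdeal : tau ∈ augIdeal (ZMod 2) := single_sub_one_mem_augIdeal 1

theorem coeff_tau_one : tau.coeff 1 = 1 := by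
  simp [tau, one_def, coeff_sub, coeff_single]

theorem augIdeal_zmod_two_eq_span : augIdeal (ZMod 2) = Ideal.span {tau} := by
  rw [augIdeal_eq_span]
  refine le_antisymm (Ideal.span_le.2 ?_) (Ideal.span_le.2 ?_)
  · rintro _ ⟨v, rfl⟩
    obtain rfl | rfl : v = 0 ∨ v = 1 := by decide +revert
    · simp [one_def]
    · exact Ideal.subset_span rfl
  · rw [Set.singleton_subset_iff]
    exact Ideal.subset_span ⟨1, rfl⟩

theorem tau_sq : tau ^ 2 = -2 * tau := single_sub_one_sq (by decide)

theorem augIdeal_zmod_two_pow (k : ℕ) :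
    augIdeal (ZMod 2) ^ (k + 1) = Ideal.span {2 ^ k * tau} := by
  induction k with
  | zero => simp [augIdeal_zmod_two_eq_span]
  | succ k ih =>
    rw [pow_succ, ih, augIdeal_zmod_two_eq_span, Ideal.span_singleton_mul_span_singleton,
      show 2 ^ k * tau * tau = -(2 ^ (k + 1) * tau) by linear_combination 2 ^ k * tau_sq,
      Ideal.span_singleton_neg]

theorem aug_zmod_two (x : ℤ[ZMod 2]) : aug (ZMod 2) x = x.coeff 0 + x.coeff 1 := by
  rw [aug, lift_apply]
  simp only [MonoidHom.one_apply, Int.zsmul_eq_mul, mul_one, implies_true, Finsupp.sum_fintype]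
  exact Fin.sum_univ_two _

theorem eq_coeff_smul_tau {x : ℤ[ZMod 2]} (hx : x ∈ augIdeal (ZMod 2)) : x = x.coeff 1 • tau := by
  have h : x.coeff 0 + x.coeff 1 = 0 := (aug_zmod_two x).symm.trans hx
  ext a
  obtain rfl | rfl : a = 0 ∨ a = 1 := by decide +revert
  all_goals simp only [coeff_smul_apply, tau, one_def, coeff_sub, coeff_single, Finsupp.sub_apply,
    Finsupp.single_apply, one_ne_zero, zero_ne_one, ↓reduceIte, smul_eq_mul]
  all_goals linarith

theorem mem_augIdeal_zmod_two_pow_iff (n : ℕ) {x : ℤ[ZMod 2]} (hx : x ∈ augIdeal (ZMod 2)) :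
    x ∈ augIdeal (ZMod 2) ^ (n + 1) ↔ (2 : ℤ) ^ n ∣ x.coeff 1 := by
  rw [augIdeal_zmod_two_pow, Ideal.mem_span_singleton']
  constructor
  · rintro ⟨r, rfl⟩
    set c := (r * tau).coeff 1
    have hr : r * tau = c • tau := eq_coeff_smul_tau (Ideal.mul_mem_left _ r tau_mem_augIdeal)
    have hc : r * (2 ^ n * tau) = ((2 : ℤ) ^ n * c) • tau := by
      rw [mul_left_comm, hr, mul_smul, zsmul_eq_mul (c • tau) ((2 : ℤ) ^ n)]
      push_cast
      rfl
    exact ⟨c, by rw [hc, coeff_smul_apply, coeff_tau_one, smul_eq_mul, mul_one]⟩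
  · rintro ⟨m, hm⟩
    refine ⟨(m : ℤ[ZMod 2]), ?_⟩
    rw [eq_coeff_smul_tau hx, hm, zsmul_eq_mul]
    push_cast
    ring

noncomputable def coeffOneModTwoPow (n : ℕ) :
    Submodule.restrictScalars ℤ (augIdeal (ZMod 2) ^ 1) →ₗ[ℤ] ZMod (2 ^ n) where
  toFun y := ((y : ℤ[ZMod 2]).coeff 1 : ZMod (2 ^ n))
  map_add' y z := by simp [coeff_add]
  map_smul' c y := by
    change (((c • (y : ℤ[ZMod 2])).coeff 1 : ℤ) : ZMod (2 ^ n)) = c • _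
    rw [coeff_smul_apply, smul_eq_mul, Int.cast_mul, zsmul_eq_mul]

theorem ker_coeffOneModTwoPow (n : ℕ) :
    LinearMap.ker (coeffOneModTwoPow n) =
      Submodule.comap (Submodule.restrictScalars ℤ (augIdeal (ZMod 2) ^ 1)).subtype
        (Submodule.restrictScalars ℤ (augIdeal (ZMod 2) ^ (n + 1))) := by
  ext y
  simp only [LinearMap.mem_ker, Submodule.mem_comap, Submodule.subtype_apply,
    Submodule.restrictScalars_mem, mem_augIdeal_zmod_two_pow_iff n (coe_mem_augIdeal y)]
  exact_mod_cast ZMod.intCast_zmod_eq_zero_iff_dvd _ (2 ^ n)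

theorem coeffOneModTwoPow_surjective (n : ℕ) : Function.Surjective (coeffOneModTwoPow n) := by
  intro c
  obtain ⟨z, rfl⟩ := ZMod.intCast_surjective c
  have hτ : tau ∈ Submodule.restrictScalars ℤ (augIdeal (ZMod 2) ^ 1) := by
    simpa using tau_mem_augIdeal
  refine ⟨z • ⟨tau, hτ⟩, ?_⟩
  change (((z • tau).coeff 1 : ℤ) : ZMod (2 ^ n)) = z
  rw [coeff_smul_apply, coeff_tau_one, smul_eq_mul, mul_one]

noncomputable def powQuotZModTwoEquiv (n : ℕ) : powQuot (ZMod 2) 1 (n + 1) ≃ₗ[ℤ] ZMod (2 ^ n) :=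
  (Submodule.quotEquivOfEq _ _ (ker_coeffOneModTwoPow n).symm).trans
    ((coeffOneModTwoPow n).quotKerEquivOfSurjective (coeffOneModTwoPow_surjective n))

end RankOne

theorem stmt4_general (V : Type) [AddCommGroup V] [Module (ZMod 2) V] (n : ℕ) :
    (∀ x : powQuot V 1 (n + 1), ((2 : ℤ) ^ (n + 1)) • x = 0) ∧
    Nonempty (powQuot (ZMod 2) 1 (n + 1) ≃+ ZMod (2 ^ n)) := by
  refine ⟨fun x => ?_, ⟨(powQuotZModTwoEquiv n).toAddEquiv⟩⟩
  rw [pow_succ' (2 : ℤ) n, mul_smul, two_pow_smul_powQuot_eq_zero, smul_zero]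

/-- For an elementary abelian 2-group `V` and `n > 0`, the quotient
`R^n(V) = I(V)/I(V)^(n+1)` is annihilated by `2^(n+1)`, and for `V = 𝔽₂` of rank one
there is an isomorphism `R^n(𝔽₂) ≅ ℤ/2^n`. -/
theorem stmt4 (V : Type) [AddCommGroup V] [Module (ZMod 2) V] (n : ℕ) (hn : 0 < n) :
    (∀ x : powQuot V 1 (n + 1), ((2 : ℤ) ^ (n + 1)) • x = 0) ∧
    Nonempty (powQuot (ZMod 2) 1 (n + 1) ≃+ ZMod (2 ^ n)) :=
  stmt4_general V n
end

section
/- For an elementary abelian 2-group V and integer n > 0, the largest subgroup of R^n(V) = I(V)/I(V)^{n+1} annihilated by 2 is naturally isomorphic to I(V)^n/I(V)^{n+1}. -/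
/-- The canonical map `I(V)^b / I(V)^k → I(V)^a / I(V)^k` induced by an inclusion
`I(V)^b ⊆ I(V)^a`. -/
noncomputable def incQuot (V : Type) [AddCommGroup V] (a b k : ℕ)
    (h : augIdeal V ^ b ≤ augIdeal V ^ a) :
    powQuot V b k →ₗ[ℤ] powQuot V a k :=
  Submodule.mapQ _ _ (Submodule.inclusion (fun x hx => h hx)) (fun _ hx => hx)

lemma two_pow_mul_sub_one_of_sq_eq_one {R : Type*} [CommRing R] {g : R} (hg : g ^ 2 = 1)
    (k : ℕ) : 2 ^ k * (g - 1) = (-1) ^ k * (g - 1) ^ (k + 1) := by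
  induction k with
  | zero => simp
  | succ k ih => linear_combination (2 : R) * ih + (-1) ^ k * (g - 1) ^ k * hg

lemma dvd_of_forall_dvd_sum_powerset {ι R : Type*} [CommRing R] {m : R} {a : Finset ι → R}
    (h : ∀ U : Finset ι, m ∣ ∑ T ∈ U.powerset, a T) (T : Finset ι) : m ∣ a T := by
  classical
  induction T using Finset.strongInduction with
  | H T ih =>
    have hT := h T
    rw [← Finset.add_sum_erase _ _ (Finset.mem_powerset_self T)] at hT
    refine (dvd_add_left (Finset.dvd_sum fun S hS => ih S ?_)).mp hT
    exact Finset.ssubset_iff_subset_ne.mpr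
      ⟨Finset.mem_powerset.mp (Finset.mem_of_mem_erase hS), Finset.ne_of_mem_erase hS⟩

namespace Submodule

variable {R M : Type*} [AddCommGroup M]

lemma mapQ_inclusion_injective [Ring R] [Module R M] {A B : Submodule R M} (C : Submodule R M)
    (hAB : A ≤ B) (h : C.comap A.subtype ≤ (C.comap B.subtype).comap (inclusion hAB)) :
    Function.Injective (mapQ (C.comap A.subtype) (C.comap B.subtype) (inclusion hAB) h) := by
  rw [← LinearMap.ker_eq_bot, ker_mapQ]
  exact mkQ_map_self _

lemma range_mapQ_inclusion_eq_ker_smul [CommRing R] [Module R M] {A B : Submodule R M}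
    (C : Submodule R M) (hAB : A ≤ B)
    (h : C.comap A.subtype ≤ (C.comap B.subtype).comap (inclusion hAB)) (r : R)
    (hr : ∀ x ∈ B, r • x ∈ C ↔ x ∈ A) :
    LinearMap.range (mapQ (C.comap A.subtype) (C.comap B.subtype) (inclusion hAB) h)
      = LinearMap.ker (r • LinearMap.id : (B ⧸ C.comap B.subtype) →ₗ[R] _) := by
  ext z
  obtain ⟨y, rfl⟩ := Quotient.mk_surjective _ z
  rw [LinearMap.mem_ker, LinearMap.smul_apply, LinearMap.id_apply, ← Quotient.mk_smul]
  constructor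
  · rintro ⟨w, hw⟩
    obtain ⟨a, rfl⟩ := Quotient.mk_surjective _ w
    rw [Quotient.mk_smul, ← hw, mapQ_apply, ← Quotient.mk_smul, Quotient.mk_eq_zero]
    exact (hr _ (hAB a.2)).mpr a.2
  · intro hy
    rw [Quotient.mk_eq_zero, mem_comap, subtype_apply, coe_smul, hr _ y.2] at hy
    exact ⟨Quotient.mk ⟨y, hy⟩, rfl⟩

end Submodule

namespace AugmentationIdeal

open AddMonoidAlgebra

variable {V : Type} [AddCommGroup V]

noncomputable def chi (ψ : V →+ Additive ℤˣ) : AddMonoidAlgebra ℤ V →ₐ[ℤ] ℤ :=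
  lift ℤ ℤ V ((Units.coeHom ℤ).comp (AddMonoidHom.toMultiplicativeLeft ψ))

@[simp]
lemma chi_single (ψ : V →+ Additive ℤˣ) (v : V) :
    chi ψ (single v 1) = ((ψ v).toMul : ℤ) := by
  simp [chi]

lemma chi_zero : chi (0 : V →+ Additive ℤˣ) = aug V := by
  refine AddMonoidAlgebra.algHom_ext (fun v => ?_) (Subsingleton.elim _ _)
  simp [aug]

lemma intCast_chi_eq_intCast_aug (ψ : V →+ Additive ℤˣ) (x : AddMonoidAlgebra ℤ V) :
    (chi ψ x : ZMod 2) = (aug V x : ZMod 2) := by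
  have h : (Algebra.ofId ℤ (ZMod 2)).comp (chi ψ) = (Algebra.ofId ℤ (ZMod 2)).comp (aug V) := by
    refine AddMonoidAlgebra.algHom_ext (fun v => ?_) (Subsingleton.elim _ _)
    rcases Int.units_eq_one_or (ψ v).toMul with h | h <;> simp [h, aug]
  exact congr($h x)

lemma two_dvd_chi_of_mem (ψ : V →+ Additive ℤˣ) {x : AddMonoidAlgebra ℤ V}
    (hx : x ∈ augIdeal V) : 2 ∣ chi ψ x := by
  have : aug V x = 0 := hx
  exact_mod_cast (ZMod.intCast_zmod_eq_zero_iff_dvd (chi ψ x) 2).mp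
    (by rw [intCast_chi_eq_intCast_aug, this, Int.cast_zero])

lemma two_pow_dvd_chi_of_mem_pow (ψ : V →+ Additive ℤˣ) {m : ℕ} {x : AddMonoidAlgebra ℤ V}
    (hx : x ∈ augIdeal V ^ m) : 2 ^ m ∣ chi ψ x := by
  induction m generalizing x with
  | zero => simp
  | succ k ih =>
    rw [pow_succ] at hx
    refine Submodule.mul_induction_on hx (fun a ha b hb => ?_) (fun y z hy hz => ?_)
    · rw [map_mul, pow_succ]
      exact mul_dvd_mul (ih ha) (two_dvd_chi_of_mem ψ hb)
    · rw [map_add]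
      exact dvd_add hy hz

lemma single_sub_one_mem (v : V) : single v (1 : ℤ) - 1 ∈ augIdeal V := by
  simp [augIdeal, RingHom.mem_ker, aug]

section ElementaryAbelian

variable [Module (ZMod 2) V] {ι : Type*} (b : Module.Basis ι (ZMod 2) V)

lemma single_sq (v : V) : single v (1 : ℤ) ^ 2 = 1 := by
  rw [sq, single_mul_single, ZModModule.add_self, mul_one]
  rfl

noncomputable def basisMonomial (T : Finset ι) : AddMonoidAlgebra ℤ V :=
  ∏ i ∈ T, (single (b i) 1 - 1)

lemma basisMonomial_mem_pow (T : Finset ι) : basisMonomial b T ∈ augIdeal V ^ T.card := by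
  rw [← Finset.prod_const]
  exact Ideal.prod_mem_prod fun i _ => single_sub_one_mem (b i)

lemma two_pow_mul_basisMonomial_mem {T : Finset ι} (hT : T.Nonempty) (k : ℕ) :
    2 ^ k * basisMonomial b T ∈ augIdeal V ^ (T.card + k) := by
  classical
  obtain ⟨i, hi⟩ := hT
  have hcard : T.card + k = (k + 1) + (T.erase i).card := by
    rw [Finset.card_erase_of_mem hi]
    have := Finset.card_pos.mpr ⟨i, hi⟩
    omega
  rw [basisMonomial, ← Finset.mul_prod_erase _ _ hi, ← mul_assoc,
    two_pow_mul_sub_one_of_sq_eq_one (single_sq (b i)), hcard, pow_add]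
  exact Ideal.mul_mem_mul (Ideal.mul_mem_left _ _ (Ideal.pow_mem_pow (single_sub_one_mem _) _))
    (basisMonomial_mem_pow b _)

lemma smul_basisMonomial_mem_pow {n : ℕ} {T : Finset ι} (hT : T.Nonempty) {c : ℤ}
    (hc : 2 ^ n ∣ c * (-2) ^ T.card) : c • basisMonomial b T ∈ augIdeal V ^ n := by
  rcases le_or_gt n T.card with hn | hn
  · rw [zsmul_eq_mul]
    exact Ideal.mul_mem_left _ _ (Ideal.pow_le_pow_right hn (basisMonomial_mem_pow b T))
  obtain ⟨d, rfl⟩ : 2 ^ (n - T.card) ∣ c := by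
    rw [← pow_sub_mul_pow 2 hn.le, neg_pow, ← mul_assoc,
      mul_dvd_mul_iff_right (pow_ne_zero _ two_ne_zero)] at hc
    exact (((isUnit_neg_one).pow _).dvd_mul_right).mp hc
  have h := two_pow_mul_basisMonomial_mem b hT (n - T.card)
  rw [Nat.add_sub_cancel' hn.le] at h
  have hd : ((2 ^ (n - T.card) * d : ℤ) : AddMonoidAlgebra ℤ V) * basisMonomial b T
      = d * (2 ^ (n - T.card) * basisMonomial b T) := by
    push_cast
    ring
  rw [zsmul_eq_mul, hd]
  exact Ideal.mul_mem_left _ _ h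

lemma single_eq_sum_basisMonomial (v : V) :
    single v (1 : ℤ) = ∑ T ∈ (b.repr v).support.powerset, basisMonomial b T := by
  have hv : ∑ i ∈ (b.repr v).support, b i = v := by
    conv_rhs => rw [← b.linearCombination_repr v, Finsupp.linearCombination_apply, Finsupp.sum]
    refine Finset.sum_congr rfl fun i hi => ?_
    have : ∀ a : ZMod 2, a ≠ 0 → a = 1 := by decide
    rw [this _ (Finsupp.mem_support_iff.mp hi), one_smul]
  simp only [basisMonomial, ← Finset.prod_add_one, sub_add_cancel, prod_single,
    Finset.prod_const_one, hv]

lemma span_basisMonomial : Submodule.span ℤ (Set.range (basisMonomial b)) = ⊤ := by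
  rw [eq_top_iff]
  rintro x -
  induction x using AddMonoidAlgebra.induction_linear with
  | zero => exact zero_mem _
  | add x y hx hy => exact add_mem hx hy
  | single v a =>
    rw [← mul_one a, ← smul_eq_mul, ← smul_single, single_eq_sum_basisMonomial b]
    exact Submodule.smul_mem _ _ (Submodule.sum_mem _ fun T _ => Submodule.subset_span ⟨T, rfl⟩)

noncomputable def basisChar [DecidableEq ι] (U : Finset ι) : V →+ Additive ℤˣ :=
  (b.constr ℕ fun i => if i ∈ U then Additive.ofMul (-1) else 0).toAddMonoidHom

lemma basisChar_empty [DecidableEq ι] : basisChar b ∅ = 0 := by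
  simp only [basisChar, Finset.notMem_empty, if_false]
  rw [show (fun _ : ι => (0 : Additive ℤˣ)) = 0 from rfl, map_zero]
  rfl

lemma chi_basisMonomial [DecidableEq ι] (U T : Finset ι) :
    chi (basisChar b U) (basisMonomial b T) = if T ⊆ U then (-2) ^ T.card else 0 := by
  have hfac : ∀ i, chi (basisChar b U) (single (b i) 1 - 1) = if i ∈ U then -2 else 0 := by
    intro i
    by_cases hi : i ∈ U <;> simp [basisChar, hi]
  simp only [basisMonomial, map_prod, hfac]
  rw [Finset.prod_ite_zero, Finset.prod_const]
  rfl

lemma chi_linearCombination [DecidableEq ι] (U : Finset ι) (c : Finset ι →₀ ℤ) :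
    chi (basisChar b U) (Finsupp.linearCombination ℤ (basisMonomial b) c)
      = ∑ T ∈ U.powerset, c T * (-2) ^ T.card := by
  rw [Finsupp.linearCombination_apply, map_finsuppSum, Finsupp.sum]
  simp only [map_zsmul, chi_basisMonomial, smul_eq_mul, mul_ite, mul_zero]
  rw [← Finset.sum_filter]
  refine Finset.sum_subset (fun T hT => ?_) (fun T _ hT => ?_)
  · exact Finset.mem_powerset.mpr (Finset.mem_filter.mp hT).2
  · simp_all

lemma mem_pow_of_forall_two_pow_dvd_chi {n : ℕ} {x : AddMonoidAlgebra ℤ V}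
    (hx : x ∈ augIdeal V) (h : ∀ ψ : V →+ Additive ℤˣ, 2 ^ n ∣ chi ψ x) :
    x ∈ augIdeal V ^ n := by
  classical
  let b := Module.Basis.ofVectorSpace (ZMod 2) V
  obtain ⟨c, rfl⟩ : ∃ c, Finsupp.linearCombination ℤ (basisMonomial b) c = x := by
    rw [← LinearMap.mem_range, Finsupp.range_linearCombination, span_basisMonomial]
    trivial
  have hc₀ : c ∅ = 0 := by
    have h₀ := chi_linearCombination b ∅ c
    rw [basisChar_empty, chi_zero, Finset.powerset_empty, Finset.sum_singleton,
      Finset.card_empty, pow_zero, mul_one] at h₀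
    rw [← h₀]
    exact hx
  have hdvd : ∀ T, 2 ^ n ∣ c T * (-2) ^ T.card :=
    dvd_of_forall_dvd_sum_powerset fun U => chi_linearCombination b U c ▸ h _
  rw [Finsupp.linearCombination_apply]
  refine Submodule.sum_mem _ fun T hT => smul_basisMonomial_mem_pow b ?_ (hdvd T)
  rw [Finset.nonempty_iff_ne_empty]
  rintro rfl
  exact Finsupp.mem_support_iff.mp hT hc₀

lemma mem_augIdeal_pow_iff {n : ℕ} (hn : 0 < n) {x : AddMonoidAlgebra ℤ V} :
    x ∈ augIdeal V ^ n ↔ x ∈ augIdeal V ∧ ∀ ψ : V →+ Additive ℤˣ, 2 ^ n ∣ chi ψ x :=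
  ⟨fun h => ⟨Ideal.pow_le_self hn.ne' h, fun ψ => two_pow_dvd_chi_of_mem_pow ψ h⟩,
    fun h => mem_pow_of_forall_two_pow_dvd_chi h.1 h.2⟩

lemma two_smul_mem_pow_succ_iff {n : ℕ} (hn : 0 < n)
    {x : AddMonoidAlgebra ℤ V} (hx : x ∈ augIdeal V) :
    (2 : ℤ) • x ∈ augIdeal V ^ (n + 1) ↔ x ∈ augIdeal V ^ n := by
  rw [mem_augIdeal_pow_iff n.succ_pos, mem_augIdeal_pow_iff hn]
  simp only [map_zsmul, smul_eq_mul, pow_succ',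
    mul_dvd_mul_iff_left (two_ne_zero : (2 : ℤ) ≠ 0), Submodule.smul_of_tower_mem _ _ hx, hx,
    true_and]

end ElementaryAbelian

end AugmentationIdeal

/-- For an elementary abelian 2-group `V` and `n > 0`, the canonical map
`I(V)^n/I(V)^(n+1) → R^n(V) = I(V)/I(V)^(n+1)` is injective with image exactly the largest
subgroup of `R^n(V)` annihilated by `2`. -/
theorem stmt5 (V : Type) [AddCommGroup V] [Module (ZMod 2) V] (n : ℕ) (hn : 0 < n) :
    Function.Injective (incQuot V 1 n (n + 1) (Ideal.pow_le_pow_right hn)) ∧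
    LinearMap.range (incQuot V 1 n (n + 1) (Ideal.pow_le_pow_right hn)) =
      LinearMap.ker ((2 : ℤ) • (LinearMap.id : powQuot V 1 (n + 1) →ₗ[ℤ] powQuot V 1 (n + 1))) :=
  ⟨Submodule.mapQ_inclusion_injective _ _ _,
    Submodule.range_mapQ_inclusion_eq_ker_smul _ _ _ _ fun _ hx =>
      AugmentationIdeal.two_smul_mem_pow_succ_iff hn (pow_one (augIdeal V) ▸ hx)⟩
end

section
/- Over F_2, for each i ≥ 0 the derivation Q_i on the symmetric algebra S*(W) of an F_2-vector space W, determined by Q_i(x) = x^{2^{i+1}} for x ∈ W and the Leibniz rule, satisfies Q_i ∘ Q_i = 0, and for any i, j the derivations Q_i and Q_j commute: Q_i ∘ Q_j = Q_j ∘ Q_i. -/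
open MvPolynomial

/-- The Milnor derivation `Q_i` on the symmetric (polynomial) algebra over `𝔽₂`:
the unique derivation with `Q_i x = x^(2^(i+1))` on linear generators. -/
noncomputable def Qder (σ : Type) (i : ℕ) :
    Derivation (ZMod 2) (MvPolynomial σ (ZMod 2)) (MvPolynomial σ (ZMod 2)) :=
  MvPolynomial.mkDerivation (ZMod 2) (fun s => X s ^ 2 ^ (i + 1))

lemma Qder_X (σ : Type) (i : ℕ) (s : σ) :
    Qder σ i (X s) = X s ^ 2 ^ (i + 1) := by
  simp [Qder, MvPolynomial.mkDerivation_X]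

lemma Qder_Qder_X (σ : Type) (i j : ℕ) (s : σ) :
    Qder σ i (Qder σ j (X s)) = 0 := by
  rw [Qder_X, Derivation.leibniz_pow]
  have h2 : ((2 ^ (j + 1) : ℕ) : MvPolynomial σ (ZMod 2)) = 0 := by
    rw [CharP.cast_eq_zero_iff _ 2]
    exact dvd_pow_self 2 (Nat.succ_ne_zero j)
  rw [nsmul_eq_mul, h2, zero_mul]

/-- In characteristic 2, the composite `Q_i ∘ Q_j` plus `Q_j ∘ Q_i`
(which equals the commutator) is again a derivation. -/
noncomputable def QQder (σ : Type) (i j : ℕ) :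
    Derivation (ZMod 2) (MvPolynomial σ (ZMod 2)) (MvPolynomial σ (ZMod 2)) :=
  Derivation.mk'
    ((Qder σ i).toLinearMap ∘ₗ (Qder σ j).toLinearMap
      + (Qder σ j).toLinearMap ∘ₗ (Qder σ i).toLinearMap)
    (by
      intro a b
      simp only [LinearMap.add_apply, LinearMap.comp_apply, Derivation.coeFn_coe,
        smul_eq_mul, map_add, Derivation.leibniz]
      have h2 : (2 : MvPolynomial σ (ZMod 2)) = 0 := CharTwo.two_eq_zero
      linear_combination (Qder σ j b * Qder σ i a + Qder σ j a * Qder σ i b) * h2)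

/-- In characteristic 2, `Q_i ∘ Q_i` is again a derivation (the cross terms
in the Leibniz rule cancel). -/
noncomputable def Qsq (σ : Type) (i : ℕ) :
    Derivation (ZMod 2) (MvPolynomial σ (ZMod 2)) (MvPolynomial σ (ZMod 2)) :=
  Derivation.mk'
    ((Qder σ i).toLinearMap ∘ₗ (Qder σ i).toLinearMap)
    (by
      intro a b
      simp only [LinearMap.comp_apply, Derivation.coeFn_coe,
        smul_eq_mul, map_add, Derivation.leibniz]
      have h2 : (2 : MvPolynomial σ (ZMod 2)) = 0 := CharTwo.two_eq_zero
      linear_combination (Qder σ i a * Qder σ i b) * h2)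

lemma QQder_eq_zero (σ : Type) (i j : ℕ) : QQder σ i j = 0 := by
  apply MvPolynomial.derivation_ext
  intro s
  show Qder σ i (Qder σ j (X s)) + Qder σ j (Qder σ i (X s)) = 0
  rw [Qder_Qder_X, Qder_Qder_X, add_zero]

lemma Qsq_eq_zero (σ : Type) (i : ℕ) : Qsq σ i = 0 := by
  apply MvPolynomial.derivation_ext
  intro s
  show Qder σ i (Qder σ i (X s)) = 0
  exact Qder_Qder_X σ i i s

/-- Over `𝔽₂`, the Milnor derivations satisfy `Q_i ∘ Q_i = 0` and commute:
`Q_i ∘ Q_j = Q_j ∘ Q_i`. -/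
theorem stmt7 (σ : Type) (i j : ℕ) :
    (∀ p : MvPolynomial σ (ZMod 2), Qder σ i (Qder σ i p) = 0) ∧
    (∀ p : MvPolynomial σ (ZMod 2), Qder σ i (Qder σ j p) = Qder σ j (Qder σ i p)) := by
  constructor
  · intro p
    exact DFunLike.congr_fun (Qsq_eq_zero σ i) p
  · intro p
    have h : Qder σ i (Qder σ j p) + Qder σ j (Qder σ i p) = 0 :=
      DFunLike.congr_fun (QQder_eq_zero σ i j) p
    have := (add_eq_zero_iff_eq_neg.mp h).trans (CharTwo.neg_eq _)
    exact this
end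

section
/- Over F_2, for any finite dimensional F_2-vector space W, the homology of the symmetric algebra S*(W) with respect to the Milnor derivation Q_i is isomorphic, as a graded algebra, to the truncated symmetric algebra S*(W)/⟨x^{2^i} : x ∈ W⟩ placed in even degrees via the Frobenius: H(S*(W), Q_i)^{2d} ≅ S^d(W)/⟨x^{2^i}⟩ and H(S*(W), Q_i)^{odd} = 0. -/
/-!
On monomials `Q x^e = ∑_{e_s odd} x^(e + (2^(i+1) - 1) δ_s)`, so `S*(W)` is the tensor product of
one-variable complexes in which `x^(2m+1) ↦ x^(2m + 2^(i+1))`, leaving the classes `x^(2m)` with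
`2m < 2^(i+1)`. Call a variable bad for `x^e` if its exponent is odd or at least `2^(i+1)`; applying
`Q` does not change the set of bad variables. Undoing `Q` at the least bad variable (for any linear
order on the variables) gives a homotopy `H` with `QH + HQ + π = id`, where `π` projects onto the
monomials without bad variables. These are exactly the squares of the monomials with all exponents
`< 2^i`, and every monomial of odd degree has a bad variable.
-/

open MvPolynomial

namespace MvPolynomial

variable {σ R M : Type*} [CommSemiring R] [AddCommMonoid M] [Module R M]

lemma monomial_eq_smul_monomial_one (e : σ →₀ ℕ) (r : R) : monomial e r = r • monomial e 1 := by
  rw [smul_monomial, smul_eq_mul, mul_one]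

noncomputable def monomialLift (g : (σ →₀ ℕ) → M) : MvPolynomial σ R →ₗ[R] M :=
  (basisMonomials σ R).constr R g

lemma monomialLift_monomial (g : (σ →₀ ℕ) → M) (e : σ →₀ ℕ) (r : R) :
    monomialLift g (monomial e r) = r • g e := by
  rw [monomial_eq_smul_monomial_one, map_smul, monomialLift,
    ← congrFun (coe_basisMonomials σ R) e, Module.Basis.constr_basis]

end MvPolynomial

namespace Qder

section

variable {σ : Type*} (i : ℕ)

def oddSupport (e : σ →₀ ℕ) : Finset σ := {s ∈ e.support | Odd (e s)}

def badSupport (e : σ →₀ ℕ) : Finset σ := {s ∈ e.support | Odd (e s) ∨ 2 ^ (i + 1) ≤ e s}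

noncomputable def shift (s : σ) : σ →₀ ℕ := Finsupp.single s (2 ^ (i + 1) - 1)

variable {i}

lemma mem_oddSupport {e : σ →₀ ℕ} {s : σ} : s ∈ oddSupport e ↔ Odd (e s) := by
  simpa [oddSupport] using fun h => h.pos.ne'

lemma mem_badSupport {e : σ →₀ ℕ} {s : σ} :
    s ∈ badSupport i e ↔ Odd (e s) ∨ 2 ^ (i + 1) ≤ e s := by
  simp only [badSupport, Finset.mem_filter, Finsupp.mem_support_iff, and_iff_right_iff_imp]
  rintro (h | h)
  · exact h.pos.ne'
  · exact (Nat.lt_of_lt_of_le (Nat.two_pow_pos _) h).ne'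

lemma oddSupport_subset_badSupport (e : σ →₀ ℕ) : oddSupport e ⊆ badSupport i e :=
  fun _ hs => mem_badSupport.2 (Or.inl (mem_oddSupport.1 hs))

lemma odd_two_pow_succ_sub_one (i : ℕ) : Odd (2 ^ (i + 1) - 1) :=
  Nat.Even.sub_odd Nat.one_le_two_pow (by simp [pow_succ]) odd_one

lemma shift_apply_self (s : σ) : shift i s s = 2 ^ (i + 1) - 1 := Finsupp.single_eq_same

lemma shift_apply_of_ne {s t : σ} (h : t ≠ s) : shift i s t = 0 :=
  Finsupp.single_eq_of_ne h

lemma badSupport_add_shift {e : σ →₀ ℕ} {s : σ} (hs : Odd (e s)) :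
    badSupport i (e + shift i s) = badSupport i e := by
  ext t
  simp only [mem_badSupport, Finsupp.add_apply]
  rcases eq_or_ne t s with rfl | ht
  · simp only [shift_apply_self, hs, true_or, iff_true]
    exact Or.inr (by have := hs.pos; omega)
  · rw [shift_apply_of_ne ht, add_zero]

lemma oddSupport_nonempty_of_odd_degree {e : σ →₀ ℕ} (he : Odd e.degree) :
    (oddSupport e).Nonempty := by
  by_contra h
  refine Nat.not_even_iff_odd.2 he (Finset.even_sum _ fun s _ => ?_)
  exact Nat.not_odd_iff_even.1 fun hs => h ⟨s, mem_oddSupport.2 hs⟩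

lemma badSupport_two_smul_nonempty_iff (e : σ →₀ ℕ) :
    (badSupport i (2 • e)).Nonempty ↔ ∃ s, 2 ^ i ≤ e s := by
  simp only [Finset.Nonempty, mem_badSupport, Finsupp.smul_apply, smul_eq_mul,
    Nat.not_odd_iff_even.2 (even_two_mul _), false_or, pow_succ', Nat.mul_le_mul_left_iff two_pos]

end

section

variable {σ : Type} (i : ℕ)

lemma apply_monomial_one (e : σ →₀ ℕ) :
    Qder σ i (monomial e 1) = ∑ s ∈ oddSupport e, monomial (e + shift i s) 1 := by
  rw [Qder, mkDerivation_monomial, one_smul, Finsupp.sum, oddSupport, Finset.sum_filter]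
  refine Finset.sum_congr rfl fun s hs => ?_
  split_ifs with ho
  · rw [ZMod.natCast_eq_one_iff_odd.2 ho, X_pow_eq_monomial, smul_eq_mul, monomial_mul, one_mul]
    refine congrArg (monomial · 1) (Finsupp.ext fun t => ?_)
    have : 0 < e s := Finsupp.mem_support_iff.1 hs |>.bot_lt
    rcases eq_or_ne t s with rfl | ht
    · simp only [Finsupp.add_apply, Finsupp.tsub_apply, Finsupp.single_eq_same, shift_apply_self]
      have := Nat.two_pow_pos (i + 1)
      omega
    · simp [Finsupp.single_eq_of_ne ht, shift_apply_of_ne ht]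
  · rw [ZMod.natCast_eq_zero_iff_even.2 (Nat.not_odd_iff_even.1 ho), monomial_zero, zero_smul]

lemma apply_sq (p : MvPolynomial σ (ZMod 2)) : Qder σ i (p ^ 2) = 0 := by
  rw [pow_two, Derivation.leibniz, CharTwo.add_self_eq_zero]

lemma apply_of_isHomogeneous_one {f : MvPolynomial σ (ZMod 2)} (hf : f.IsHomogeneous 1) :
    Qder σ i f = f ^ 2 ^ (i + 1) := by
  replace hf : f ∈ Submodule.span (ZMod 2) (Set.range X) := by
    rw [← homogeneousSubmodule_one_eq_span_X]; exact hf
  induction hf using Submodule.span_induction with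
  | mem f hf =>
    obtain ⟨s, rfl⟩ := hf
    exact mkDerivation_X _ _ _
  | zero => simp
  | add f g _ _ hf hg => rw [map_add, hf, hg, add_pow_char_pow]
  | smul c f _ hf => rw [Derivation.map_smul, hf, smul_pow, ZMod.pow_card_pow]

end

section

variable {σ : Type} (i : ℕ)

noncomputable def projMonomial (e : σ →₀ ℕ) : MvPolynomial σ (ZMod 2) :=
  if (badSupport i e).Nonempty then 0 else monomial e 1

noncomputable def proj : MvPolynomial σ (ZMod 2) →ₗ[ZMod 2] MvPolynomial σ (ZMod 2) :=
  monomialLift (projMonomial i)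

lemma proj_monomial_one (e : σ →₀ ℕ) : proj i (monomial e 1) = projMonomial i e := by
  rw [proj, monomialLift_monomial, one_smul]

lemma proj_Qder (p : MvPolynomial σ (ZMod 2)) : proj i (Qder σ i p) = 0 := by
  induction p using MvPolynomial.induction_on' with
  | monomial e r =>
    rw [monomial_eq_smul_monomial_one, Derivation.map_smul, map_smul, apply_monomial_one,
      map_sum, Finset.sum_eq_zero, smul_zero]
    intro s hs
    have hne : (badSupport i (e + shift i s)).Nonempty :=
      ⟨s, badSupport_add_shift (mem_oddSupport.1 hs) ▸ oddSupport_subset_badSupport e hs⟩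
    rw [proj_monomial_one, projMonomial, if_pos hne]
  | add p q hp hq => rw [map_add, map_add, hp, hq, add_zero]

lemma proj_eq_zero_of_isHomogeneous_of_odd {p : MvPolynomial σ (ZMod 2)} {k : ℕ}
    (hp : p.IsHomogeneous k) (hk : Odd k) : proj i p = 0 := by
  rw [p.as_sum, map_sum]
  refine Finset.sum_eq_zero fun e he => ?_
  have hdeg : e.degree = k := by
    rw [Finsupp.degree_eq_weight_one]; exact hp (mem_support_iff.1 he)
  have hne : (badSupport i e).Nonempty :=
    (oddSupport_nonempty_of_odd_degree (hdeg ▸ hk)).mono (oddSupport_subset_badSupport e)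
  rw [monomial_eq_smul_monomial_one, map_smul, proj_monomial_one,
    projMonomial, if_pos hne, smul_zero]

noncomputable def half (e : σ →₀ ℕ) : σ →₀ ℕ := e.mapRange (· / 2) (Nat.zero_div 2)

noncomputable def projSqrtMonomial (e : σ →₀ ℕ) : MvPolynomial σ (ZMod 2) :=
  if (badSupport i e).Nonempty then 0 else monomial (half e) 1

noncomputable def projSqrt : MvPolynomial σ (ZMod 2) →ₗ[ZMod 2] MvPolynomial σ (ZMod 2) :=
  monomialLift (projSqrtMonomial i)

lemma proj_eq_projSqrt_sq (p : MvPolynomial σ (ZMod 2)) : proj i p = projSqrt i p ^ 2 := by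
  induction p using MvPolynomial.induction_on' with
  | monomial e r =>
    rw [proj, projSqrt, monomialLift_monomial, monomialLift_monomial, smul_pow,
      projMonomial, projSqrtMonomial]
    split_ifs with h
    · simp
    · have heven : 2 • half e = e := by
        ext s
        have : ¬ Odd (e s) := fun hs => h ⟨s, mem_badSupport.2 (Or.inl hs)⟩
        simp only [Finsupp.smul_apply, half, Finsupp.mapRange_apply, smul_eq_mul]
        rw [Nat.not_odd_iff] at this
        omega
      rw [monomial_pow, heven, one_pow, ZMod.pow_card]
  | add p q hp hq => rw [map_add, map_add, hp, hq, ← CharTwo.add_sq]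

lemma add_projSqrt_sq_mem_span (q : MvPolynomial σ (ZMod 2)) :
    q + projSqrt i (q ^ 2) ∈ Ideal.span {g : MvPolynomial σ (ZMod 2) |
      ∃ f : MvPolynomial σ (ZMod 2), f.IsHomogeneous 1 ∧ g = f ^ 2 ^ i} := by
  induction q using MvPolynomial.induction_on' with
  | monomial e r =>
    rw [monomial_pow, projSqrt, monomialLift_monomial, projSqrtMonomial]
    split_ifs with h
    · obtain ⟨s, hs⟩ := (badSupport_two_smul_nonempty_iff e).1 h
      rw [smul_zero, add_zero,
        ← tsub_add_cancel_of_le (Finsupp.single_le_iff.2 hs : Finsupp.single s (2 ^ i) ≤ e),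
        ← mul_one r, ← monomial_mul, ← X_pow_eq_monomial]
      exact Ideal.mul_mem_left _ _ (Ideal.subset_span ⟨X s, isHomogeneous_X _ _, rfl⟩)
    · have : half (2 • e) = e := by ext s; simp [half]
      rw [this, smul_monomial, smul_eq_mul, mul_one, ZMod.pow_card, CharTwo.add_self_eq_zero]
      exact zero_mem _
  | add p q hp hq =>
    rw [CharTwo.add_sq, map_add, add_add_add_comm]
    exact add_mem hp hq

lemma exists_Qder_eq_sq_of_mem_span {q : MvPolynomial σ (ZMod 2)}
    (hq : q ∈ Ideal.span {g : MvPolynomial σ (ZMod 2) |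
      ∃ f : MvPolynomial σ (ZMod 2), f.IsHomogeneous 1 ∧ g = f ^ 2 ^ i}) :
    ∃ r, q ^ 2 = Qder σ i r := by
  induction hq using Submodule.span_induction with
  | mem g hg =>
    obtain ⟨f, hf, rfl⟩ := hg
    exact ⟨f, by rw [apply_of_isHomogeneous_one i hf, ← pow_mul, ← pow_succ]⟩
  | zero => exact ⟨0, by simp⟩
  | add x y _ _ hx hy =>
    obtain ⟨⟨r, hr⟩, ⟨r', hr'⟩⟩ := And.intro hx hy
    exact ⟨r + r', by rw [CharTwo.add_sq, hr, hr', map_add]⟩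
  | smul a x _ hx =>
    obtain ⟨r, hr⟩ := hx
    refine ⟨a ^ 2 * r, ?_⟩
    rw [smul_eq_mul, mul_pow, hr, Derivation.leibniz, apply_sq, smul_zero, add_zero, smul_eq_mul]

end

section

variable {σ : Type} [LinearOrder σ] (i : ℕ)

noncomputable def homotopyMonomial (e : σ →₀ ℕ) : MvPolynomial σ (ZMod 2) :=
  if h : (badSupport i e).Nonempty then
    if Odd (e ((badSupport i e).min' h)) then 0
    else monomial (e - shift i ((badSupport i e).min' h)) 1
  else 0

noncomputable def homotopy : MvPolynomial σ (ZMod 2) →ₗ[ZMod 2] MvPolynomial σ (ZMod 2) :=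
  monomialLift (homotopyMonomial i)

lemma homotopy_monomial_one (e : σ →₀ ℕ) : homotopy i (monomial e 1) = homotopyMonomial i e := by
  rw [homotopy, monomialLift_monomial, one_smul]

lemma homotopyMonomial_of_badSupport_eq {e e' : σ →₀ ℕ} (h : (badSupport i e).Nonempty)
    (he' : badSupport i e' = badSupport i e) :
    homotopyMonomial i e' = if Odd (e' ((badSupport i e).min' h)) then 0
      else monomial (e' - shift i ((badSupport i e).min' h)) 1 := by
  simp only [homotopyMonomial, he', dif_pos h]

lemma homotopy_apply_monomial_one {e : σ →₀ ℕ} (h : (badSupport i e).Nonempty) :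
    homotopy i (Qder σ i (monomial e 1)) = ∑ s ∈ oddSupport e,
      if Odd ((e + shift i s) ((badSupport i e).min' h)) then 0
      else monomial (e + shift i s - shift i ((badSupport i e).min' h)) 1 := by
  rw [apply_monomial_one, map_sum]
  refine Finset.sum_congr rfl fun s hs => ?_
  rw [homotopy_monomial_one,
    homotopyMonomial_of_badSupport_eq i h (badSupport_add_shift (mem_oddSupport.1 hs))]

lemma Qder_homotopy_add_homotopy_Qder_of_odd {e : σ →₀ ℕ} (h : (badSupport i e).Nonempty)
    (hj : Odd (e ((badSupport i e).min' h))) :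
    Qder σ i (homotopyMonomial i e) + homotopy i (Qder σ i (monomial e 1)) = monomial e 1 := by
  set j := (badSupport i e).min' h
  rw [homotopyMonomial_of_badSupport_eq i h rfl, if_pos hj, map_zero, zero_add,
    homotopy_apply_monomial_one i h, Finset.sum_eq_single j]
  · have : ¬ Odd ((e + shift i j) j) := by
      rw [Finsupp.add_apply, shift_apply_self, Nat.not_odd_iff_even]
      exact hj.add_odd (odd_two_pow_succ_sub_one i)
    rw [if_neg this, add_tsub_cancel_right]
  · intro s _ hsj
    rw [if_pos (by rwa [Finsupp.add_apply, shift_apply_of_ne (Ne.symm hsj), add_zero])]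
  · exact fun hj' => absurd (mem_oddSupport.2 hj) hj'

lemma Qder_homotopy_add_homotopy_Qder_of_even {e : σ →₀ ℕ} (h : (badSupport i e).Nonempty)
    (hj : ¬ Odd (e ((badSupport i e).min' h))) :
    Qder σ i (homotopyMonomial i e) + homotopy i (Qder σ i (monomial e 1)) = monomial e 1 := by
  set j := (badSupport i e).min' h
  have hlarge : 2 ^ (i + 1) ≤ e j := (mem_badSupport.1 (Finset.min'_mem _ h)).resolve_left hj
  have hle : shift i j ≤ e := Finsupp.single_le_iff.2 (by omega)
  have hodd : oddSupport (e - shift i j) = insert j (oddSupport e) := by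
    ext t
    rw [Finset.mem_insert, mem_oddSupport, mem_oddSupport, Finsupp.tsub_apply]
    rcases eq_or_ne t j with rfl | htj
    · simp only [shift_apply_self, true_or, iff_true]
      exact Nat.Even.sub_odd ((Nat.sub_le _ _).trans hlarge) (Nat.not_odd_iff_even.1 hj)
        (odd_two_pow_succ_sub_one i)
    · simp [shift_apply_of_ne htj, htj]
  rw [homotopyMonomial_of_badSupport_eq i h rfl, if_neg hj, apply_monomial_one, hodd,
    Finset.sum_insert (fun hj' => hj (mem_oddSupport.1 hj')), tsub_add_cancel_of_le hle,
    homotopy_apply_monomial_one i h, add_assoc, ← Finset.sum_add_distrib, Finset.sum_eq_zero,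
    add_zero]
  intro s hs
  have hsj : s ≠ j := fun hsj => hj (hsj ▸ mem_oddSupport.1 hs)
  rw [if_neg (by rwa [Finsupp.add_apply, shift_apply_of_ne (Ne.symm hsj), add_zero]),
    tsub_add_eq_add_tsub hle, CharTwo.add_self_eq_zero]

lemma Qder_homotopy_add_homotopy_Qder_add_proj_monomial_one (e : σ →₀ ℕ) :
    Qder σ i (homotopyMonomial i e) + homotopy i (Qder σ i (monomial e 1)) + projMonomial i e =
      monomial e 1 := by
  by_cases h : (badSupport i e).Nonempty
  · rw [projMonomial, if_pos h, add_zero]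
    by_cases hj : Odd (e ((badSupport i e).min' h))
    · exact Qder_homotopy_add_homotopy_Qder_of_odd i h hj
    · exact Qder_homotopy_add_homotopy_Qder_of_even i h hj
  · have : oddSupport e = ∅ := Finset.subset_empty.1 <|
      Finset.not_nonempty_iff_eq_empty.1 h ▸ oddSupport_subset_badSupport e
    simp [homotopyMonomial, projMonomial, h, apply_monomial_one, this]

lemma Qder_homotopy_add_homotopy_Qder_add_proj (p : MvPolynomial σ (ZMod 2)) :
    Qder σ i (homotopy i p) + homotopy i (Qder σ i p) + proj i p = p := by
  induction p using MvPolynomial.induction_on' with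
  | monomial e r =>
    rw [monomial_eq_smul_monomial_one]
    simp only [map_smul, Derivation.map_smul, homotopy_monomial_one, proj_monomial_one,
      ← smul_add, Qder_homotopy_add_homotopy_Qder_add_proj_monomial_one]
  | add p q hp hq =>
    simp only [map_add]
    linear_combination hp + hq

end

end Qder

theorem stmt9_general (σ : Type) (i : ℕ) :
    (∀ p : MvPolynomial σ (ZMod 2), Qder σ i (p ^ 2) = 0) ∧
    (∀ (k : ℕ) (p : MvPolynomial σ (ZMod 2)), p.IsHomogeneous k → Odd k →
      Qder σ i p = 0 → ∃ q, p = Qder σ i q) ∧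
    (∀ p : MvPolynomial σ (ZMod 2), Qder σ i p = 0 →
      ∃ q r : MvPolynomial σ (ZMod 2), p = q ^ 2 + Qder σ i r) ∧
    (∀ q : MvPolynomial σ (ZMod 2),
      (∃ r, q ^ 2 = Qder σ i r) ↔
        q ∈ Ideal.span {g : MvPolynomial σ (ZMod 2) |
          ∃ f : MvPolynomial σ (ZMod 2), f.IsHomogeneous 1 ∧ g = f ^ 2 ^ i}) := by
  open Qder in
  let : LinearOrder σ := IsWellOrder.linearOrder WellOrderingRel
  have hcycle (p : MvPolynomial σ (ZMod 2)) (hp : Qder σ i p = 0) :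
      p = Qder σ i (homotopy i p) + proj i p := by
    simpa [hp] using (Qder_homotopy_add_homotopy_Qder_add_proj i p).symm
  refine ⟨Qder.apply_sq i, fun k p hp hk hQ => ⟨homotopy i p, ?_⟩,
    fun p hQ => ⟨projSqrt i p, homotopy i p, ?_⟩, fun q => ⟨fun ⟨r, hr⟩ => ?_,
    exists_Qder_eq_sq_of_mem_span i⟩⟩
  · simpa [proj_eq_zero_of_isHomogeneous_of_odd i hp hk] using hcycle p hQ
  · rw [← proj_eq_projSqrt_sq, add_comm]
    exact hcycle p hQ
  · have : projSqrt i (q ^ 2) = 0 := by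
      rw [← pow_eq_zero_iff two_ne_zero, ← proj_eq_projSqrt_sq, hr, proj_Qder]
    simpa [this] using add_projSqrt_sq_mem_span i q

/-- Over `𝔽₂`, for a finite dimensional vector space `W`, the homology of `S^*(W)` with respect
to the Milnor derivation `Q_i` is the truncated symmetric algebra `S^*(W)/⟨x^(2^i) : x ∈ W⟩`
placed in even degrees via the Frobenius `z ↦ z²`: squares are cycles, homogeneous cycles of
odd degree are boundaries, every cycle is a square modulo boundaries, and `q²` is a boundary
precisely when `q` lies in the ideal generated by the `2^i`-th powers of linear forms. -/
theorem stmt9 (σ : Type) [Fintype σ] (i : ℕ) :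
    (∀ p : MvPolynomial σ (ZMod 2), Qder σ i (p ^ 2) = 0) ∧
    (∀ (k : ℕ) (p : MvPolynomial σ (ZMod 2)), p.IsHomogeneous k → Odd k →
      Qder σ i p = 0 → ∃ q, p = Qder σ i q) ∧
    (∀ p : MvPolynomial σ (ZMod 2), Qder σ i p = 0 →
      ∃ q r : MvPolynomial σ (ZMod 2), p = q ^ 2 + Qder σ i r) ∧
    (∀ q : MvPolynomial σ (ZMod 2),
      (∃ r, q ^ 2 = Qder σ i r) ↔
        q ∈ Ideal.span {g : MvPolynomial σ (ZMod 2) |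
          ∃ f : MvPolynomial σ (ZMod 2), f.IsHomogeneous 1 ∧ g = f ^ 2 ^ i}) :=
  stmt9_general σ i
end

section
/- Over F_2, for i ≥ 0 and a vector space W, the Koszul-type complex ⋯ → Λ^j(W) ⊗ S^•(W) → Λ^{j-1}(W) ⊗ S^{•+2^i}(W) → ⋯ → S^{•+j·2^i}(W) → 0, with differential τ_i induced by Λ^j → Λ^{j-1}⊗Λ^1 followed by the (2^i)-th power map Λ^1 = W → S^{2^i}(W) and multiplication, has homology S*(W)/⟨x^{2^i} : x ∈ W⟩ concentrated in homological degree zero. -/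
/-!
Fix a well-order on the basis `σ`. For a basis element `e_T ⊗ x^μ` let `s₀` be the least index
with `s₀ ∈ T` or `x_{s₀}^{2^i} ∣ x^μ`. Sending `e_T ⊗ x^μ` to `e_{T ∪ {s₀}} ⊗ x^μ / x_{s₀}^{2^i}`
when `s₀ ∉ T`, and to `0` otherwise, defines a contracting homotopy `h`: `τ h + h τ` is the
identity in exterior degrees `j > 0`. (It is the tensor product, ordered along `σ`, of the
homotopies of the one-variable complexes `e_s ⊗ 𝔽₂[x_s] → 𝔽₂[x_s]`.) In degree `0` the image of `τ`
is the ideal generated by the `x_s^{2^i}`, which is also the ideal generated by all `2^i`-th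
powers of linear forms because Frobenius is additive.
-/

open MvPolynomial

/-- The Koszul differential `τ_i` on the model `Λ^•(W) ⊗ S^•(W)`, where `Λ^•(W) ⊗ S^•(W)`
is modelled as finitely supported functions from finite subsets of a basis of `W` (exterior
monomials) to polynomials: `τ_i (e_T ⊗ p) = Σ_{s ∈ T} e_{T∖s} ⊗ x_s^(2^i)·p`, i.e. the
composite of the exterior coproduct `Λ^j → Λ^(j-1) ⊗ Λ^1`, the `2^i`-th power map
`Λ^1 = W → S^(2^i)(W)` and multiplication. -/
noncomputable def koszulD (σ : Type) [DecidableEq σ] (i : ℕ) :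
    (Finset σ →₀ MvPolynomial σ (ZMod 2)) →ₗ[ZMod 2]
      (Finset σ →₀ MvPolynomial σ (ZMod 2)) :=
  Finsupp.lsum (ZMod 2) (fun T => ∑ s ∈ T,
    (Finsupp.lsingle (T.erase s)).comp (LinearMap.mulLeft (ZMod 2) (X s ^ 2 ^ i)))

theorem MvPolynomial.span_pow_isHomogeneous_one_eq_span_X_pow {σ R : Type*} [CommSemiring R]
    (p n : ℕ) [Fact p.Prime] [CharP R p] :
    Ideal.span {g : MvPolynomial σ R | ∃ f, f.IsHomogeneous 1 ∧ g = f ^ p ^ n} =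
      Ideal.span (Set.range fun s => X s ^ p ^ n) := by
  refine le_antisymm (Ideal.span_le.mpr ?_)
    (Ideal.span_mono <| by rintro _ ⟨s, rfl⟩; exact ⟨X s, isHomogeneous_X R s, rfl⟩)
  rintro _ ⟨f, hf, rfl⟩
  rw [← mem_homogeneousSubmodule, homogeneousSubmodule_one_eq_span_X] at hf
  induction hf using Submodule.span_induction with
  | mem _ h => obtain ⟨s, rfl⟩ := h; exact Ideal.subset_span ⟨s, rfl⟩
  | zero => rw [zero_pow (pow_ne_zero _ (Fact.out : p.Prime).ne_zero)]; exact zero_mem _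
  | add f g _ _ hfq hgq => rw [add_pow_char_pow]; exact add_mem hfq hgq
  | smul c f _ hfq => rw [smul_pow]; exact Submodule.smul_of_tower_mem _ _ hfq

section Koszul

variable {σ : Type} [DecidableEq σ] (i : ℕ)

theorem koszulD_single (T : Finset σ) (p : MvPolynomial σ (ZMod 2)) :
    koszulD σ i (Finsupp.single T p) =
      ∑ s ∈ T, Finsupp.single (T.erase s) (X s ^ 2 ^ i * p) := by
  simp [koszulD]

theorem koszulD_single_monomial (T : Finset σ) (μ : σ →₀ ℕ) :
    koszulD σ i (Finsupp.single T (monomial μ 1)) =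
      ∑ s ∈ T, Finsupp.single (T.erase s) (monomial (Finsupp.single s (2 ^ i) + μ) 1) := by
  simp [koszulD_single, X_pow_eq_monomial, monomial_mul]

theorem koszulD_koszulD (m : Finset σ →₀ MvPolynomial σ (ZMod 2)) :
    koszulD σ i (koszulD σ i m) = 0 := by
  induction m using Finsupp.induction_linear with
  | zero => simp
  | add f g hf hg => rw [map_add, map_add, hf, hg, add_zero]
  | single T p =>
    simp only [koszulD_single, map_sum]
    rw [Finset.sum_sigma']
    -- the terms for `(s, t)` and `(t, s)` coincide and cancel in characteristic two
    refine Finset.sum_involution (fun x _ => ⟨x.2, x.1⟩) ?_ ?_ ?_ fun _ _ => rfl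
    · rintro ⟨s, t⟩ -
      rw [Finset.erase_right_comm, mul_left_comm]
      exact ZModModule.add_self _
    · rintro ⟨s, t⟩ hst -
      simp only [Finset.mem_sigma, Finset.mem_erase] at hst
      exact fun h => hst.2.1 (congrArg Sigma.fst h)
    · rintro ⟨s, t⟩ hst
      simp only [Finset.mem_sigma, Finset.mem_erase] at hst ⊢
      exact ⟨hst.2.2, hst.2.1.symm, hst.1⟩

theorem koszulD_smul (a : MvPolynomial σ (ZMod 2)) (m : Finset σ →₀ MvPolynomial σ (ZMod 2)) :
    koszulD σ i (a • m) = a • koszulD σ i m := by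
  induction m using Finsupp.induction_linear with
  | zero => simp
  | add f g hf hg => rw [smul_add, map_add, map_add, hf, hg, smul_add]
  | single T p =>
    simp only [Finsupp.smul_single, koszulD_single, Finset.smul_sum, smul_eq_mul, mul_left_comm]

theorem koszulD_apply_empty_mem_span (m : Finset σ →₀ MvPolynomial σ (ZMod 2)) :
    koszulD σ i m ∅ ∈ Ideal.span (Set.range fun s => X s ^ 2 ^ i) := by
  induction m using Finsupp.induction_linear with
  | zero => simp
  | add f g hf hg => rw [map_add, Finsupp.add_apply]; exact add_mem hf hg
  | single T p =>
    rw [koszulD_single, Finsupp.finsetSum_apply]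
    refine sum_mem fun s _ => ?_
    rw [Finsupp.single_apply]
    split_ifs
    · exact Ideal.mul_mem_right p _ (Ideal.subset_span ⟨s, rfl⟩)
    · exact zero_mem _

theorem exists_koszulD_eq_single_empty_iff (p : MvPolynomial σ (ZMod 2)) :
    (∃ m : Finset σ →₀ MvPolynomial σ (ZMod 2),
        (∀ T ∈ m.support, T.card = 1) ∧ koszulD σ i m = Finsupp.single ∅ p) ↔
      p ∈ Ideal.span (Set.range fun s => X s ^ 2 ^ i) := by
  refine ⟨fun ⟨m, _, hm⟩ => by simpa [hm] using koszulD_apply_empty_mem_span i m, fun hp => ?_⟩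
  suffices ∃ m ∈ Finsupp.supported _ (MvPolynomial σ (ZMod 2)) {T : Finset σ | T.card = 1},
      koszulD σ i m = Finsupp.single ∅ p by
    obtain ⟨m, hm, h⟩ := this
    exact ⟨m, (Finsupp.mem_supported _ _).mp hm, h⟩
  induction hp using Submodule.span_induction with
  | mem _ h =>
    obtain ⟨s, rfl⟩ := h
    refine ⟨Finsupp.single {s} 1, Finsupp.single_mem_supported _ _ (Finset.card_singleton s), ?_⟩
    simp [koszulD_single]
  | zero => exact ⟨0, zero_mem _, by simp⟩
  | add p p' _ _ hp hp' =>
    obtain ⟨m, hm, h⟩ := hp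
    obtain ⟨m', hm', h'⟩ := hp'
    exact ⟨m + m', add_mem hm hm', by rw [map_add, h, h', Finsupp.single_add]⟩
  | smul a p _ hp =>
    obtain ⟨m, hm, h⟩ := hp
    exact ⟨a • m, Submodule.smul_mem _ a hm, by rw [koszulD_smul, h, Finsupp.smul_single]⟩

def koszulPivots (q : ℕ) (T : Finset σ) (μ : σ →₀ ℕ) : Finset σ :=
  T ∪ {s ∈ μ.support | q ≤ μ s}

theorem koszulPivots_erase_add {q : ℕ} (hq : 0 < q) {T : Finset σ} {s : σ} (hs : s ∈ T)
    (μ : σ →₀ ℕ) : koszulPivots q (T.erase s) (Finsupp.single s q + μ) = koszulPivots q T μ := by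
  ext t
  by_cases h : t = s
  · subst h
    simp only [koszulPivots, Finset.mem_union, Finset.mem_filter]
    simp [hs, Finsupp.mem_support_iff]
    omega
  · simp only [koszulPivots, Finset.mem_union, Finset.mem_filter]
    simp [h]

variable [LinearOrder σ]

noncomputable def koszulHomotopyBasis (q : ℕ) (T : Finset σ) (μ : σ →₀ ℕ) :
    Finset σ →₀ MvPolynomial σ (ZMod 2) :=
  if h : (koszulPivots q T μ).Nonempty then
    if (koszulPivots q T μ).min' h ∈ T then 0
    else Finsupp.single (insert ((koszulPivots q T μ).min' h) T)
      (monomial (μ - Finsupp.single ((koszulPivots q T μ).min' h) q) 1)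
  else 0

variable (σ) in
noncomputable def koszulHomotopy (q : ℕ) :
    (Finset σ →₀ MvPolynomial σ (ZMod 2)) →ₗ[ZMod 2] (Finset σ →₀ MvPolynomial σ (ZMod 2)) :=
  Finsupp.lsum (ZMod 2) fun T =>
    (basisMonomials σ (ZMod 2)).constr (ZMod 2) (koszulHomotopyBasis q T)

theorem koszulHomotopy_single_monomial (q : ℕ) (T : Finset σ) (μ : σ →₀ ℕ) :
    koszulHomotopy σ q (Finsupp.single T (monomial μ 1)) = koszulHomotopyBasis q T μ := by
  rw [koszulHomotopy, Finsupp.lsum_single]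
  exact (basisMonomials σ (ZMod 2)).constr_basis (ZMod 2) _ μ

theorem koszulHomotopy_koszulD_single_of_min'_mem {T : Finset σ} {μ : σ →₀ ℕ}
    (hP : (koszulPivots (2 ^ i) T μ).Nonempty) (hmin : (koszulPivots (2 ^ i) T μ).min' hP ∈ T) :
    koszulHomotopy σ (2 ^ i) (koszulD σ i (Finsupp.single T (monomial μ 1))) =
      Finsupp.single T (monomial μ 1) := by
  set s₀ := (koszulPivots (2 ^ i) T μ).min' hP
  have hP_erase {s} (hs : s ∈ T) := koszulPivots_erase_add (Nat.two_pow_pos i) hs μ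
  simp only [koszulD_single_monomial, map_sum, koszulHomotopy_single_monomial]
  rw [Finset.sum_eq_single_of_mem s₀ hmin]
  · simp only [koszulHomotopyBasis, hP_erase hmin, dif_pos hP]
    rw [if_neg (Finset.notMem_erase s₀ T), Finset.insert_erase hmin, add_tsub_cancel_left]
  · intro s hs hne
    simp only [koszulHomotopyBasis, hP_erase hs, dif_pos hP]
    rw [if_pos (Finset.mem_erase.mpr ⟨Ne.symm hne, hmin⟩)]

-- the terms of `τ (h e)` and `h (τ e)` indexed by the same `s ∈ T` cancel in characteristic two
theorem koszulD_koszulHomotopy_add_koszulHomotopy_koszulD_single_of_min'_notMem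
    {T : Finset σ} {μ : σ →₀ ℕ}
    (hP : (koszulPivots (2 ^ i) T μ).Nonempty) (hmin : (koszulPivots (2 ^ i) T μ).min' hP ∉ T) :
    koszulD σ i (koszulHomotopy σ (2 ^ i) (Finsupp.single T (monomial μ 1))) +
      koszulHomotopy σ (2 ^ i) (koszulD σ i (Finsupp.single T (monomial μ 1))) =
      Finsupp.single T (monomial μ 1) := by
  set s₀ := (koszulPivots (2 ^ i) T μ).min' hP
  have hle : Finsupp.single s₀ (2 ^ i) ≤ μ := by
    have hmem : s₀ ∈ koszulPivots (2 ^ i) T μ := Finset.min'_mem _ hP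
    rw [koszulPivots, Finset.mem_union, Finset.mem_filter] at hmem
    exact Finsupp.single_le_iff.mpr (hmem.resolve_left hmin).2
  have hP_erase {s} (hs : s ∈ T) := koszulPivots_erase_add (Nat.two_pow_pos i) hs μ
  have hsum : koszulHomotopy σ (2 ^ i) (koszulD σ i (Finsupp.single T (monomial μ 1))) =
      ∑ s ∈ T, Finsupp.single ((insert s₀ T).erase s)
        (monomial (Finsupp.single s (2 ^ i) + (μ - Finsupp.single s₀ (2 ^ i))) 1) := by
    simp only [koszulD_single_monomial, map_sum, koszulHomotopy_single_monomial]
    refine Finset.sum_congr rfl fun s hs => ?_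
    have hne : s ≠ s₀ := fun h => hmin (h ▸ hs)
    simp only [koszulHomotopyBasis, hP_erase hs, dif_pos hP]
    rw [if_neg fun h => hmin (Finset.mem_of_mem_erase h), add_tsub_assoc_of_le hle,
      Finset.erase_insert_of_ne (Ne.symm hne)]
  rw [hsum, koszulHomotopy_single_monomial, koszulHomotopyBasis, dif_pos hP, if_neg hmin,
    koszulD_single_monomial, Finset.sum_insert hmin, Finset.erase_insert hmin,
    add_tsub_cancel_of_le hle, add_assoc, ZModModule.add_self, add_zero]

theorem koszulD_koszulHomotopy_add_koszulHomotopy_koszulD_single {T : Finset σ}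
    (hT : T.Nonempty) (μ : σ →₀ ℕ) :
    koszulD σ i (koszulHomotopy σ (2 ^ i) (Finsupp.single T (monomial μ 1))) +
      koszulHomotopy σ (2 ^ i) (koszulD σ i (Finsupp.single T (monomial μ 1))) =
      Finsupp.single T (monomial μ 1) := by
  have hP : (koszulPivots (2 ^ i) T μ).Nonempty := hT.mono Finset.subset_union_left
  by_cases hmin : (koszulPivots (2 ^ i) T μ).min' hP ∈ T
  · rw [koszulHomotopy_koszulD_single_of_min'_mem i hP hmin, koszulHomotopy_single_monomial,
      koszulHomotopyBasis, dif_pos hP, if_pos hmin, map_zero, zero_add]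
  · exact koszulD_koszulHomotopy_add_koszulHomotopy_koszulD_single_of_min'_notMem i hP hmin

theorem koszulD_koszulHomotopy_add_koszulHomotopy_koszulD
    (m : Finset σ →₀ MvPolynomial σ (ZMod 2)) (hm : ∀ T ∈ m.support, T.Nonempty) :
    koszulD σ i (koszulHomotopy σ (2 ^ i) m) + koszulHomotopy σ (2 ^ i) (koszulD σ i m) = m := by
  set φ := koszulD σ i ∘ₗ koszulHomotopy σ (2 ^ i) + koszulHomotopy σ (2 ^ i) ∘ₗ koszulD σ i
  have hφ {T : Finset σ} (hT : T.Nonempty) : φ ∘ₗ Finsupp.lsingle T = Finsupp.lsingle T :=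
    (basisMonomials σ (ZMod 2)).ext fun μ => by
      simpa [φ, coe_basisMonomials] using
        koszulD_koszulHomotopy_add_koszulHomotopy_koszulD_single i hT μ
  calc φ m = φ (m.sum Finsupp.single) := by rw [m.sum_single]
    _ = m.sum Finsupp.single := by
      rw [Finsupp.sum, map_sum]
      exact Finset.sum_congr rfl fun T hT => LinearMap.congr_fun (hφ (hm T hT)) (m T)
    _ = m := m.sum_single

theorem koszulHomotopy_support_card (q j : ℕ) (m : Finset σ →₀ MvPolynomial σ (ZMod 2))
    (hm : ∀ T ∈ m.support, T.card = j) :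
    ∀ S ∈ (koszulHomotopy σ q m).support, S.card = j + 1 := by
  suffices koszulHomotopy σ q m ∈
      Finsupp.supported (MvPolynomial σ (ZMod 2)) (ZMod 2) {S : Finset σ | S.card = j + 1} from
    (Finsupp.mem_supported _ _).mp this
  rw [← m.sum_single, Finsupp.sum, map_sum]
  refine sum_mem fun T hT => ?_
  rw [koszulHomotopy, Finsupp.lsum_single]
  refine Submodule.span_le.mpr ?_ ((Module.Basis.constr_range _ _).le ⟨m T, rfl⟩)
  rintro _ ⟨μ, rfl⟩
  unfold koszulHomotopyBasis
  split_ifs with hP hmin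
  · exact zero_mem _
  · exact Finsupp.single_mem_supported _ _
      ((Finset.card_insert_of_notMem hmin).trans (by rw [hm T hT]))
  · exact zero_mem _

end Koszul

theorem stmt11_general (σ : Type) [DecidableEq σ] (i : ℕ) :
    (∀ m, koszulD σ i (koszulD σ i m) = 0) ∧
    (∀ (j : ℕ), 0 < j → ∀ m : Finset σ →₀ MvPolynomial σ (ZMod 2),
      (∀ T ∈ m.support, T.card = j) → koszulD σ i m = 0 →
        ∃ m' : Finset σ →₀ MvPolynomial σ (ZMod 2),
          (∀ T ∈ m'.support, T.card = j + 1) ∧ koszulD σ i m' = m) ∧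
    (∀ p : MvPolynomial σ (ZMod 2),
      (∃ m' : Finset σ →₀ MvPolynomial σ (ZMod 2),
        (∀ T ∈ m'.support, T.card = 1) ∧ koszulD σ i m' = Finsupp.single ∅ p) ↔
      p ∈ Ideal.span {g : MvPolynomial σ (ZMod 2) |
        ∃ f : MvPolynomial σ (ZMod 2), f.IsHomogeneous 1 ∧ g = f ^ 2 ^ i}) := by
  refine ⟨koszulD_koszulD i, fun j hj m hm hdm => ?_, fun p => ?_⟩
  · let _ : LinearOrder σ := WellOrderingRel.isWellOrder.linearOrder
    refine ⟨koszulHomotopy σ (2 ^ i) m, koszulHomotopy_support_card _ j m hm, ?_⟩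
    simpa [hdm] using koszulD_koszulHomotopy_add_koszulHomotopy_koszulD i m
      fun T hT => Finset.card_pos.mp (hm T hT ▸ hj)
  · rw [exists_koszulD_eq_single_empty_iff, span_pow_isHomogeneous_one_eq_span_X_pow]

/-- Over `𝔽₂`, the Koszul-type complex `⋯ → Λ^j(W) ⊗ S^•(W) → Λ^(j-1)(W) ⊗ S^(•+2^i)(W) → ⋯`
with differential `τ_i` has homology `S^*(W)/⟨x^(2^i) : x ∈ W⟩` concentrated in homological
degree zero: `τ_i² = 0`, the complex is exact in exterior degrees `j > 0`, and in degree `0`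
the image is the ideal generated by the `2^i`-th powers of linear forms. -/
theorem stmt11 (σ : Type) [Fintype σ] [DecidableEq σ] (i : ℕ) :
    (∀ m, koszulD σ i (koszulD σ i m) = 0) ∧
    (∀ (j : ℕ), 0 < j → ∀ m : Finset σ →₀ MvPolynomial σ (ZMod 2),
      (∀ T ∈ m.support, T.card = j) → koszulD σ i m = 0 →
        ∃ m' : Finset σ →₀ MvPolynomial σ (ZMod 2),
          (∀ T ∈ m'.support, T.card = j + 1) ∧ koszulD σ i m' = m) ∧
    (∀ p : MvPolynomial σ (ZMod 2),
      (∃ m' : Finset σ →₀ MvPolynomial σ (ZMod 2),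
        (∀ T ∈ m'.support, T.card = 1) ∧ koszulD σ i m' = Finsupp.single ∅ p) ↔
      p ∈ Ideal.span {g : MvPolynomial σ (ZMod 2) |
        ∃ f : MvPolynomial σ (ZMod 2), f.IsHomogeneous 1 ∧ g = f ^ 2 ^ i}) :=
  stmt11_general σ i
end

section
/- Over F_2, for a vector space W of dimension r, the filtration quotients of the Frobenius filtration on the symmetric algebra are given by f_t S*(W)/f_{t-1} S*(W) ≅ Λ^t(W) ⊗ S*(W), where S*(W) acts on the quotient through the Frobenius; moreover there is an isomorphism of S*(W)-modules (via Φ) ⊕_{t≥0} f_t S*(W)/f_{t-1} S*(W) ≅ S*(W). -/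
/-!
Every exponent vector `d` splits uniquely as `𝟙_T + 2h` with `T = {s | d s odd}` and
`h = ⌊d / 2⌋`, so `x^T g² ↦ (T, g)` is a linear isomorphism `S(W) ≅ ⊕_T S(W)`; it turns
multiplication by `g²` into multiplication by `g` on each summand. A monomial of degree `u` has at
most `u` odd exponents, so a generator `m g²` of `f_t` (with `m` homogeneous of degree `u ≤ t`)
lands in the summands with `|T| ≤ t`; conversely `x^T g²` with `|T| ≤ t` is itself a generator.
Hence `f_t` is the preimage of `⊕_{|T| ≤ t}`, and `f_t / f_{t-1}` is the sum of the summands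
with `|T| = t`.
-/

open MvPolynomial

/-- The Frobenius filtration `f_t S^*(W)`: the span of products `m · g²` with `m` homogeneous
of degree at most `t`. -/
noncomputable def frobFilt (σ : Type) (t : ℕ) :
    Submodule (ZMod 2) (MvPolynomial σ (ZMod 2)) :=
  Submodule.span (ZMod 2) {p | ∃ u ≤ t, ∃ m g : MvPolynomial σ (ZMod 2),
    m.IsHomogeneous u ∧ p = m * g ^ 2}

/-- The predecessor filtration stage, with `f_{-1} = 0`. -/
noncomputable def frobFiltPred (σ : Type) : ℕ → Submodule (ZMod 2) (MvPolynomial σ (ZMod 2))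
  | 0 => ⊥
  | (t + 1) => frobFilt σ t

namespace Finsupp

variable {σ : Type*}

noncomputable def oddPart (d : σ →₀ ℕ) : Finset σ := {s ∈ d.support | d s % 2 = 1}

noncomputable def halfPart (d : σ →₀ ℕ) : σ →₀ ℕ :=
  d.mapRange (· / 2) (Nat.zero_div 2)

noncomputable def indicatorOne (T : Finset σ) : σ →₀ ℕ := ∑ s ∈ T, single s 1

theorem mem_oddPart {d : σ →₀ ℕ} {s : σ} : s ∈ oddPart d ↔ d s % 2 = 1 := by
  simp only [oddPart, Finset.mem_filter, mem_support_iff, and_iff_right_iff_imp]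
  omega

@[simp]
theorem halfPart_apply (d : σ →₀ ℕ) (s : σ) : halfPart d s = d s / 2 := rfl

open Classical in
@[simp]
theorem indicatorOne_apply (T : Finset σ) (s : σ) :
    indicatorOne T s = if s ∈ T then 1 else 0 := by
  simp [indicatorOne, finsetSum_apply, single_apply]

theorem indicatorOne_oddPart_add_two_nsmul_halfPart (d : σ →₀ ℕ) :
    indicatorOne (oddPart d) + 2 • halfPart d = d := by
  classical
  ext s
  simp only [coe_add, Pi.add_apply, indicatorOne_apply, mem_oddPart, smul_apply, smul_eq_mul,
    halfPart_apply]
  split_ifs <;> omega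

noncomputable def parityEquiv : (σ →₀ ℕ) ≃ Finset σ × (σ →₀ ℕ) where
  toFun d := (oddPart d, halfPart d)
  invFun p := indicatorOne p.1 + 2 • p.2
  left_inv := indicatorOne_oddPart_add_two_nsmul_halfPart
  right_inv := by
    classical
    rintro ⟨T, h⟩
    have hval (s : σ) : (indicatorOne T + 2 • h) s = (if s ∈ T then 1 else 0) + 2 * h s := by
      simp
    refine Prod.ext (Finset.ext fun s => ?_) (ext fun s => ?_)
    · change s ∈ oddPart _ ↔ s ∈ T
      rw [mem_oddPart, hval]
      split_ifs with hs <;> simp only [hs, iff_true, iff_false] <;> omega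
    · change halfPart _ s = h s
      rw [halfPart_apply, hval]
      split_ifs <;> omega

theorem parityEquiv_indicatorOne_add_two_nsmul (T : Finset σ) (h : σ →₀ ℕ) :
    parityEquiv (indicatorOne T + 2 • h) = (T, h) :=
  parityEquiv.apply_symm_apply (T, h)

theorem card_oddPart_le_degree (d : σ →₀ ℕ) : (oddPart d).card ≤ d.degree :=
  calc (oddPart d).card = ∑ s ∈ oddPart d, 1 := Finset.card_eq_sum_ones _
    _ ≤ ∑ s ∈ oddPart d, d s :=
      Finset.sum_le_sum fun s hs => by have := mem_oddPart.mp hs; omega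
    _ ≤ ∑ s ∈ d.support, d s :=
      Finset.sum_le_sum_of_subset (Finset.filter_subset _ _)
    _ = d.degree := rfl

end Finsupp

namespace MvPolynomial

open Finsupp

variable (R σ : Type*) [CommSemiring R]

-- Over a general base `expand 2` takes the place of squaring; over `ZMod 2` they agree.
noncomputable def squarefreeDecomposition :
    MvPolynomial σ R ≃ₗ[R] (Finset σ →₀ MvPolynomial σ R) :=
  AddMonoidAlgebra.coeffLinearEquiv R ≪≫ₗ Finsupp.domLCongr parityEquiv ≪≫ₗ
    Finsupp.curryLinearEquiv R ≪≫ₗ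
    Finsupp.mapRange.linearEquiv (AddMonoidAlgebra.coeffLinearEquiv R).symm

variable {R σ}

theorem squarefreeDecomposition_monomial (d : σ →₀ ℕ) (c : R) :
    squarefreeDecomposition R σ (monomial d c) =
      single (oddPart d) (monomial (halfPart d) c) := by
  simp only [squarefreeDecomposition, LinearEquiv.trans_apply]
  change mapRange.linearEquiv _
    (curryLinearEquiv R (Finsupp.domLCongr parityEquiv (single d c))) = _
  rw [Finsupp.domLCongr_single, curryLinearEquiv_apply, curry_single, mapRange.linearEquiv_apply,
    mapRange_single]
  rfl

theorem prod_X_eq_monomial_indicatorOne (T : Finset σ) :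
    ∏ s ∈ T, (X s : MvPolynomial σ R) = monomial (indicatorOne T) 1 :=
  (monomial_sum_one T _).symm

theorem squarefreeDecomposition_prod_X_mul_expand (T : Finset σ) (g : MvPolynomial σ R) :
    squarefreeDecomposition R σ ((∏ s ∈ T, X s) * expand 2 g) = single T g := by
  induction g using MvPolynomial.induction_on' with
  | monomial h c =>
    rw [prod_X_eq_monomial_indicatorOne, expand_monomial, monomial_mul, one_mul,
      squarefreeDecomposition_monomial]
    have hT := parityEquiv_indicatorOne_add_two_nsmul T h
    rw [show oddPart (indicatorOne T + 2 • h) = T from congrArg Prod.fst hT,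
      show halfPart (indicatorOne T + 2 • h) = h from congrArg Prod.snd hT]
  | add p q hp hq => rw [map_add, mul_add, map_add, hp, hq, single_add]

theorem squarefreeDecomposition_symm_single (T : Finset σ) (g : MvPolynomial σ R) :
    (squarefreeDecomposition R σ).symm (single T g) = (∏ s ∈ T, X s) * expand 2 g := by
  rw [LinearEquiv.symm_apply_eq, squarefreeDecomposition_prod_X_mul_expand]

theorem squarefreeDecomposition_expand_mul (g p : MvPolynomial σ R) :
    squarefreeDecomposition R σ (expand 2 g * p) = g • squarefreeDecomposition R σ p := by
  obtain ⟨p, rfl⟩ := (squarefreeDecomposition R σ).symm.surjective p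
  induction p using Finsupp.induction_linear with
  | zero => simp
  | add p q hp hq => simp only [map_add, mul_add, hp, hq, smul_add]
  | single T f =>
    rw [squarefreeDecomposition_symm_single, mul_left_comm, ← map_mul,
      squarefreeDecomposition_prod_X_mul_expand, squarefreeDecomposition_prod_X_mul_expand,
      smul_single, smul_eq_mul]

theorem squarefreeDecomposition_mem_supported {m : MvPolynomial σ R} {u : ℕ}
    (hm : m.IsHomogeneous u) :
    squarefreeDecomposition R σ m ∈ Finsupp.supported _ R {T : Finset σ | T.card ≤ u} := by
  rw [m.as_sum, map_sum]
  refine Submodule.sum_mem _ fun d hd => ?_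
  rw [squarefreeDecomposition_monomial]
  exact Finsupp.single_mem_supported R _ <|
    (Finsupp.card_oddPart_le_degree d).trans_eq (hm.degree_eq_sum_deg_support hd).symm

theorem isHomogeneous_prod_X (T : Finset σ) :
    (∏ s ∈ T, (X s : MvPolynomial σ R)).IsHomogeneous T.card := by
  simpa using IsHomogeneous.prod T (fun s => (X s : MvPolynomial σ R)) (fun _ => 1)
    fun s _ => isHomogeneous_X R s

variable (R σ) in
/-- The projection `S(W) → Λ^t(W) ⊗ S(W)` of the paper. -/
noncomputable def exteriorComponent (t : ℕ) :
    MvPolynomial σ R →ₗ[R] ({T : Finset σ // T.card = t} →₀ MvPolynomial σ R) :=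
  Finsupp.lcomapDomain Subtype.val Subtype.val_injective ∘ₗ
    (squarefreeDecomposition R σ).toLinearMap

theorem exteriorComponent_prod_X_mul_expand {t : ℕ} (T : Finset σ) (hT : T.card = t)
    (g : MvPolynomial σ R) :
    exteriorComponent R σ t ((∏ s ∈ T, X s) * expand 2 g) = Finsupp.single ⟨T, hT⟩ g := by
  rw [exteriorComponent, LinearMap.comp_apply, LinearEquiv.coe_coe,
    squarefreeDecomposition_prod_X_mul_expand, Finsupp.lcomapDomain_apply]
  exact Finsupp.comapDomain_single _ (⟨T, hT⟩ : {T : Finset σ // T.card = t}) g _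

theorem exteriorComponent_eq_zero_iff {t : ℕ} (p : MvPolynomial σ R) :
    exteriorComponent R σ t p = 0 ↔
      ∀ T ∈ (squarefreeDecomposition R σ p).support, T.card ≠ t := by
  refine ⟨fun h T hT hTt => ?_, fun h => Finsupp.ext fun T => ?_⟩
  · exact Finsupp.mem_support_iff.mp hT (DFunLike.congr_fun h ⟨T, hTt⟩)
  · by_contra hne
    exact h T (Finsupp.mem_support_iff.mpr hne) T.2

theorem exteriorComponent_symm_mapDomain {t : ℕ}
    (x : {T : Finset σ // T.card = t} →₀ MvPolynomial σ R) :
    exteriorComponent R σ t ((squarefreeDecomposition R σ).symm (x.mapDomain Subtype.val)) =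
      x := by
  rw [exteriorComponent, LinearMap.comp_apply, LinearEquiv.coe_coe, LinearEquiv.apply_symm_apply,
    Finsupp.lcomapDomain_apply]
  exact Finsupp.comapDomain_mapDomain _ Subtype.val_injective x

end MvPolynomial

section FrobeniusFiltration

variable {σ : Type}

theorem frobFilt_eq_comap (t : ℕ) : frobFilt σ t =
    (Finsupp.supported _ (ZMod 2) {T : Finset σ | T.card ≤ t}).comap
      (squarefreeDecomposition (ZMod 2) σ).toLinearMap := by
  refine le_antisymm (Submodule.span_le.mpr ?_) fun p hp => ?_
  · rintro _ ⟨u, hu, m, g, hm, rfl⟩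
    rw [SetLike.mem_coe, Submodule.mem_comap, LinearEquiv.coe_coe, mul_comm, ← expand_zmod,
      squarefreeDecomposition_expand_mul, Finsupp.mem_supported]
    refine (Finset.coe_subset.mpr Finsupp.support_smul).trans <| (Finsupp.mem_supported _ _).mp <|
      Finsupp.supported_mono ?_ (squarefreeDecomposition_mem_supported hm)
    exact fun T (hT : T.card ≤ u) => hT.trans hu
  · rw [Submodule.mem_comap, LinearEquiv.coe_coe, Finsupp.mem_supported] at hp
    rw [← (squarefreeDecomposition (ZMod 2) σ).symm_apply_apply p,
      ← Finsupp.sum_single (squarefreeDecomposition (ZMod 2) σ p), Finsupp.sum, map_sum]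
    refine Submodule.sum_mem _ fun T hT => Submodule.subset_span ?_
    rw [squarefreeDecomposition_symm_single, expand_zmod]
    exact ⟨T.card, hp hT, _, _, isHomogeneous_prod_X T, rfl⟩

theorem frobFiltPred_eq_comap (t : ℕ) : frobFiltPred σ t =
    (Finsupp.supported _ (ZMod 2) {T : Finset σ | T.card < t}).comap
      (squarefreeDecomposition (ZMod 2) σ).toLinearMap := by
  cases t with
  | zero => simp [frobFiltPred, Finsupp.supported_empty, Submodule.comap_bot]
  | succ t => simp [frobFiltPred, frobFilt_eq_comap]

theorem mem_frobFilt_iff {t : ℕ} {p : MvPolynomial σ (ZMod 2)} :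
    p ∈ frobFilt σ t ↔
      ∀ T ∈ (squarefreeDecomposition (ZMod 2) σ p).support, T.card ≤ t := by
  rw [frobFilt_eq_comap, Submodule.mem_comap, LinearEquiv.coe_coe, Finsupp.mem_supported]
  rfl

theorem mem_frobFiltPred_iff {t : ℕ} {p : MvPolynomial σ (ZMod 2)} :
    p ∈ frobFiltPred σ t ↔
      ∀ T ∈ (squarefreeDecomposition (ZMod 2) σ p).support, T.card < t := by
  rw [frobFiltPred_eq_comap, Submodule.mem_comap, LinearEquiv.coe_coe, Finsupp.mem_supported]
  rfl

theorem map_exteriorComponent_frobFilt (t : ℕ) :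
    (frobFilt σ t).map (exteriorComponent (ZMod 2) σ t) = ⊤ := by
  refine Submodule.eq_top_iff'.mpr fun x => ⟨_, ?_, exteriorComponent_symm_mapDomain x⟩
  rw [SetLike.mem_coe, mem_frobFilt_iff, LinearEquiv.apply_symm_apply]
  classical
  intro T hT
  obtain ⟨U, -, rfl⟩ := Finset.mem_image.mp (Finsupp.mapDomain_support hT)
  exact U.2.le

end FrobeniusFiltration

/-- `Λ^t(W) ⊗ S^*(W)` is modelled by finitely supported functions from `t`-element subsets of
a basis to polynomials. -/
theorem stmt13_general (σ : Type) :
    (∀ t : ℕ, ∃ φ : MvPolynomial σ (ZMod 2) →ₗ[ZMod 2]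
        ({T : Finset σ // T.card = t} →₀ MvPolynomial σ (ZMod 2)),
      (∀ (T : Finset σ) (hT : T.card = t) (g : MvPolynomial σ (ZMod 2)),
        φ ((∏ s ∈ T, X s) * g ^ 2) = Finsupp.single ⟨T, hT⟩ g) ∧
      Submodule.map φ (frobFilt σ t) = ⊤ ∧
      (∀ p ∈ frobFiltPred σ t, φ p = 0) ∧
      (∀ p ∈ frobFilt σ t, φ p = 0 → p ∈ frobFiltPred σ t)) ∧
    (∃ e : MvPolynomial σ (ZMod 2) ≃ₗ[ZMod 2] (Finset σ →₀ MvPolynomial σ (ZMod 2)),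
      (∀ (T : Finset σ) (g : MvPolynomial σ (ZMod 2)),
        e ((∏ s ∈ T, X s) * g ^ 2) = Finsupp.single T g) ∧
      (∀ g p : MvPolynomial σ (ZMod 2), e (g ^ 2 * p) = g • e p)) := by
  simp only [← expand_zmod]
  refine ⟨fun t => ⟨exteriorComponent (ZMod 2) σ t, exteriorComponent_prod_X_mul_expand,
    map_exteriorComponent_frobFilt t, fun p hp => ?_, fun p hp hp0 => ?_⟩,
    ⟨squarefreeDecomposition (ZMod 2) σ, squarefreeDecomposition_prod_X_mul_expand,
      squarefreeDecomposition_expand_mul⟩⟩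
  · exact (exteriorComponent_eq_zero_iff p).mpr fun T hT => (mem_frobFiltPred_iff.mp hp T hT).ne
  · exact mem_frobFiltPred_iff.mpr fun T hT =>
      (mem_frobFilt_iff.mp hp T hT).lt_of_ne ((exteriorComponent_eq_zero_iff p).mp hp0 T hT)

/-- Over `𝔽₂`, for `W` of dimension `r`: the filtration quotients of the Frobenius filtration
are `f_t/f_{t-1} ≅ Λ^t(W) ⊗ S^*(W)` (modelled by finitely supported functions from
`t`-element subsets of a basis to polynomials), via `x_1⋯x_t·g² ↦ (x_1 ∧ ⋯ ∧ x_t) ⊗ g`;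
moreover there is an isomorphism of `S^*(W)`-modules (acting through the Frobenius)
`⊕_t f_t/f_{t-1} ≅ S^*(W)`. -/
theorem stmt13 (σ : Type) [Fintype σ] [DecidableEq σ] :
    (∀ t : ℕ, ∃ φ : MvPolynomial σ (ZMod 2) →ₗ[ZMod 2]
        ({T : Finset σ // T.card = t} →₀ MvPolynomial σ (ZMod 2)),
      (∀ (T : Finset σ) (hT : T.card = t) (g : MvPolynomial σ (ZMod 2)),
        φ ((∏ s ∈ T, X s) * g ^ 2) = Finsupp.single ⟨T, hT⟩ g) ∧
      Submodule.map φ (frobFilt σ t) = ⊤ ∧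
      (∀ p ∈ frobFiltPred σ t, φ p = 0) ∧
      (∀ p ∈ frobFilt σ t, φ p = 0 → p ∈ frobFiltPred σ t)) ∧
    (∃ e : MvPolynomial σ (ZMod 2) ≃ₗ[ZMod 2] (Finset σ →₀ MvPolynomial σ (ZMod 2)),
      (∀ (T : Finset σ) (g : MvPolynomial σ (ZMod 2)),
        e ((∏ s ∈ T, X s) * g ^ 2) = Finsupp.single T g) ∧
      (∀ g p : MvPolynomial σ (ZMod 2), e (g ^ 2 * p) = g • e p)) :=
  stmt13_general σ
end

section
/- Let M be a graded module over Z[v] (v of positive degree) such that for each degree d there exists N(d) with (v^{N(d)} M ∩ tors_v M)^d = 0, where tors_v M is the submodule of elements annihilated by some power of v. Then the following are equivalent: (1) the v-torsion equals the v-annihilated submodule, ann_v M = tors_v M; (2) the natural map ann_v M → (tors_v M)/v·(tors_v M) is injective; (3) this map is surjective. -/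
open Polynomial

/-! In the presence of a grading, a `v`-torsion element is `v`-annihilated as soon as its
homogeneous components are. If `ann_v M → tors_v M / v` is surjective, iterating it writes a
homogeneous torsion `x` of degree `d` as `a + v^N y` with `v a = 0` and `y` torsion, so
`v x = v^N (v y)` lies in `(v^N M ∩ tors_v M)^(d + k)`, which vanishes for `N = N(d + k)`.
If the map is injective, induction on `n` shows that `v^n x = 0` forces `v x = 0`: by induction
`v (v x) = 0`, so `v x` is an annihilated element that is `v` times a torsion element. -/

section PowTorsion

variable {R M : Type*} [Monoid R] [AddMonoid M] [DistribMulAction R M] (v : R)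

theorem smul_eq_zero_of_pow_smul_eq_zero_of_injective
    (hinj : ∀ x : M, v • x = 0 → (∃ y : M, (∃ n : ℕ, v ^ n • y = 0) ∧ x = v • y) → x = 0)
    (n : ℕ) {x : M} (hx : v ^ n • x = 0) : v • x = 0 := by
  induction n generalizing x with
  | zero => rw [pow_zero, one_smul] at hx; rw [hx, smul_zero]
  | succ n ih =>
    have hvx : v • (v • x) = 0 := ih (by rwa [← mul_smul, ← pow_succ])
    exact hinj _ hvx ⟨x, ⟨n + 1, hx⟩, rfl⟩

theorem exists_eq_add_pow_smul_of_surjective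
    (hsurj : ∀ x : M, (∃ n : ℕ, v ^ n • x = 0) →
      ∃ a y : M, v • a = 0 ∧ (∃ n : ℕ, v ^ n • y = 0) ∧ x = a + v • y)
    (N : ℕ) {x : M} (hx : ∃ n : ℕ, v ^ n • x = 0) :
    ∃ a y : M, v • a = 0 ∧ (∃ n : ℕ, v ^ n • y = 0) ∧ x = a + v ^ N • y := by
  induction N with
  | zero => exact ⟨0, x, smul_zero v, hx, by rw [pow_zero, one_smul, zero_add]⟩
  | succ N ih =>
    obtain ⟨a, y, ha, hy, rfl⟩ := ih
    obtain ⟨b, z, hb, hz, rfl⟩ := hsurj y hy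
    refine ⟨a + v ^ N • b, z, ?_, hz, ?_⟩
    · rw [smul_add, ha, zero_add, smul_smul, ← pow_succ', pow_succ, mul_smul, hb, smul_zero]
    · rw [smul_add, add_assoc, smul_smul, ← pow_succ]

end PowTorsion

section Graded

variable {ι R M σ : Type*} [DecidableEq ι] [AddCancelCommMonoid ι] [AddCommMonoid M]
  [SetLike σ M] [AddSubmonoidClass σ M] (ℳ : ι → σ) [DirectSum.Decomposition ℳ]
  [Monoid R] [DistribMulAction R M] {v : R} {k : ι}

theorem DirectSum.decompose_smul_add_of_smul_mem (hv : ∀ d, ∀ x ∈ ℳ d, v • x ∈ ℳ (d + k))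
    (x : M) (i : ι) :
    (DirectSum.decompose ℳ (v • x) (i + k) : M) = v • (DirectSum.decompose ℳ x i : M) := by
  induction x using DirectSum.Decomposition.inductionOn ℳ with
  | zero => simp
  | @homogeneous j m =>
    obtain ⟨m, hm⟩ := m
    by_cases h : j = i
    · subst h
      rw [DirectSum.decompose_of_mem_same ℳ hm, DirectSum.decompose_of_mem_same ℳ (hv _ _ hm)]
    · rw [DirectSum.decompose_of_mem_ne ℳ hm h,
        DirectSum.decompose_of_mem_ne ℳ (hv _ _ hm) (add_right_cancel.mt h), smul_zero]
  | add a b ha hb =>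
    simp only [smul_add, DirectSum.decompose_add, DirectSum.add_apply, AddMemClass.coe_add,
      ha, hb]

theorem DirectSum.decompose_pow_smul_add_of_smul_mem (hv : ∀ d, ∀ x ∈ ℳ d, v • x ∈ ℳ (d + k))
    (n : ℕ) (x : M) (i : ι) :
    (DirectSum.decompose ℳ (v ^ n • x) (i + n • k) : M)
      = v ^ n • (DirectSum.decompose ℳ x i : M) := by
  induction n with
  | zero => rw [zero_nsmul, add_zero, pow_zero, one_smul, one_smul]
  | succ n ih =>
    rw [succ_nsmul, ← add_assoc, pow_succ', mul_smul,
      DirectSum.decompose_smul_add_of_smul_mem ℳ hv, ih, mul_smul]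

theorem smul_eq_zero_of_pow_smul_eq_zero_of_homogeneous
    (hv : ∀ d, ∀ x ∈ ℳ d, v • x ∈ ℳ (d + k))
    (hhom : ∀ d, ∀ x ∈ ℳ d, (∃ n : ℕ, v ^ n • x = 0) → v • x = 0)
    (n : ℕ) {x : M} (hx : v ^ n • x = 0) : v • x = 0 := by
  classical
  have hcomp (i : ι) : v ^ n • (DirectSum.decompose ℳ x i : M) = 0 := by
    rw [← DirectSum.decompose_pow_smul_add_of_smul_mem ℳ hv, hx, DirectSum.decompose_zero,
      DirectSum.zero_apply, ZeroMemClass.coe_zero]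
  rw [← DirectSum.sum_support_decompose ℳ x, Finset.smul_sum]
  exact Finset.sum_eq_zero fun i _ ↦ hhom i _ (DirectSum.decompose ℳ x i).2 ⟨n, hcomp i⟩

end Graded

theorem stmt15_general (M : Type) [AddCommGroup M] [Module (Polynomial ℤ) M]
    (k : ℤ) (ℳ : ℤ → Submodule ℤ M)
    (hdecomp : DirectSum.IsInternal ℳ)
    (hv : ∀ d : ℤ, ∀ x ∈ ℳ d, (X : Polynomial ℤ) • x ∈ ℳ (d + k))
    (hN : ∀ d : ℤ, ∃ N : ℕ, ∀ x ∈ ℳ d,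
      (∃ m : M, x = (X : Polynomial ℤ) ^ N • m) →
      (∃ n : ℕ, (X : Polynomial ℤ) ^ n • x = 0) → x = 0) :
    ((∀ x : M, (∃ n : ℕ, (X : Polynomial ℤ) ^ n • x = 0) → (X : Polynomial ℤ) • x = 0) ↔
      (∀ x : M, (X : Polynomial ℤ) • x = 0 →
        (∃ y : M, (∃ n : ℕ, (X : Polynomial ℤ) ^ n • y = 0) ∧ x = (X : Polynomial ℤ) • y) →
        x = 0)) ∧
    ((∀ x : M, (∃ n : ℕ, (X : Polynomial ℤ) ^ n • x = 0) → (X : Polynomial ℤ) • x = 0) ↔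
      (∀ x : M, (∃ n : ℕ, (X : Polynomial ℤ) ^ n • x = 0) →
        ∃ a y : M, (X : Polynomial ℤ) • a = 0 ∧
          (∃ n : ℕ, (X : Polynomial ℤ) ^ n • y = 0) ∧ x = a + (X : Polynomial ℤ) • y)) := by
  refine ⟨⟨fun hann x _ ⟨y, hy, hxy⟩ ↦ hxy ▸ hann y hy,
    fun hinj x ⟨n, hn⟩ ↦ smul_eq_zero_of_pow_smul_eq_zero_of_injective _ hinj n hn⟩,
    ⟨fun hann x hx ↦ ⟨x, 0, hann x hx, ⟨0, by simp⟩, by simp⟩, fun hsurj ↦ ?_⟩⟩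
  have : DirectSum.Decomposition ℳ := hdecomp.chooseDecomposition
  refine fun x ⟨n, hn⟩ ↦ smul_eq_zero_of_pow_smul_eq_zero_of_homogeneous ℳ hv ?_ n hn
  intro d x hxd ⟨n, hn⟩
  obtain ⟨N, hNd⟩ := hN (d + k)
  obtain ⟨a, y, ha, -, rfl⟩ := exists_eq_add_pow_smul_of_surjective _ hsurj N ⟨n, hn⟩
  refine hNd _ (hv d _ hxd) ⟨(X : ℤ[X]) • y, ?_⟩ ⟨n, ?_⟩
  · rw [smul_add, ha, zero_add, smul_smul, ← pow_succ', pow_succ, mul_smul]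
  · rw [smul_smul, ← pow_succ, pow_succ', mul_smul, hn, smul_zero]

/-- Let `M` be a graded module over `ℤ[v]` (with `v` of positive degree `k`), graded by an
internal direct sum decomposition `ℳ`, such that for each degree `d` there exists `N(d)` with
`(v^(N(d)) M ∩ tors_v M)^d = 0`. Then the following are equivalent: (1) `ann_v M = tors_v M`;
(2) the natural map `ann_v M → (tors_v M)/v` is injective; (3) this map is surjective. -/
theorem stmt15 (M : Type) [AddCommGroup M] [Module (Polynomial ℤ) M]
    (k : ℤ) (hk : 0 < k) (ℳ : ℤ → Submodule ℤ M)
    (hdecomp : DirectSum.IsInternal ℳ)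
    (hv : ∀ d : ℤ, ∀ x ∈ ℳ d, (X : Polynomial ℤ) • x ∈ ℳ (d + k))
    (hN : ∀ d : ℤ, ∃ N : ℕ, ∀ x ∈ ℳ d,
      (∃ m : M, x = (X : Polynomial ℤ) ^ N • m) →
      (∃ n : ℕ, (X : Polynomial ℤ) ^ n • x = 0) → x = 0) :
    ((∀ x : M, (∃ n : ℕ, (X : Polynomial ℤ) ^ n • x = 0) → (X : Polynomial ℤ) • x = 0) ↔
      (∀ x : M, (X : Polynomial ℤ) • x = 0 →
        (∃ y : M, (∃ n : ℕ, (X : Polynomial ℤ) ^ n • y = 0) ∧ x = (X : Polynomial ℤ) • y) →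
        x = 0)) ∧
    ((∀ x : M, (∃ n : ℕ, (X : Polynomial ℤ) ^ n • x = 0) → (X : Polynomial ℤ) • x = 0) ↔
      (∀ x : M, (∃ n : ℕ, (X : Polynomial ℤ) ^ n • x = 0) →
        ∃ a y : M, (X : Polynomial ℤ) • a = 0 ∧
          (∃ n : ℕ, (X : Polynomial ℤ) ^ n • y = 0) ∧ x = a + (X : Polynomial ℤ) • y)) :=
  stmt15_general M k ℳ hdecomp hv hN
end
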